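/- arXiv:1112.1372 — 14 statements merged into one kernel-verified Lean document; each statement's English description precedes it below -/
import Mathlib

section
/- For every threshold T ≥ 1, low service rate μ ∈ (0,1), and arrival rate λ with 0 ≤ λ < 1 and λ ≠ μ, the birth–death expression for the expected sojourn time equals the simplified rational form; that is, [ (1/(μ-λ))·( μ^T − (T+1)λ^T + (λ/(μ-λ))·(μ^T − λ^T) ) + λ^T·(T+1−Tλ)/(1−λ)^2 ] divided by [ (μ^{T+1} − λ^{T+1})/(μ−λ) + λ^{T+1}/(1−λ) ] equals g(λ)/((1−λ)·d(λ)). -/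
noncomputable def g (T : ℕ) (μ : ℝ) (x : ℝ) : ℝ :=
  -((T : ℝ) - 1) * (1 - μ) * x ^ T
    - (1 - μ) * ∑ j ∈ Finset.Icc 1 (T - 1),
        μ ^ (j - 1) * (((T : ℝ) - ((j : ℝ) + 1)) * μ + (j : ℝ) - 1 - (T : ℝ)) * x ^ (T - j)
    + μ ^ (T - 1)

noncomputable def d (T : ℕ) (μ : ℝ) (x : ℝ) : ℝ :=
  (1 - μ) * ∑ j ∈ Finset.Icc 0 (T - 1), μ ^ j * x ^ (T - j) + μ ^ T

noncomputable def W (T : ℕ) (μ : ℝ) (x : ℝ) : ℝ :=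
  g T μ x / ((1 - x) * d T μ x)

lemma sgeo (μ lam : ℝ) : ∀ m : ℕ,
    (μ - lam) * ∑ j ∈ Finset.Icc 1 m, μ ^ (j - 1) * lam ^ (m - j) = μ ^ m - lam ^ m := by
  intro m
  induction m with
  | zero => simp
  | succ m ih =>
    rw [Finset.sum_Icc_succ_top (by omega : 1 ≤ m + 1)]
    have key : ∑ j ∈ Finset.Icc 1 m, μ ^ (j - 1) * lam ^ (m + 1 - j)
        = lam * ∑ j ∈ Finset.Icc 1 m, μ ^ (j - 1) * lam ^ (m - j) := by
      rw [Finset.mul_sum]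
      refine Finset.sum_congr rfl fun j hj => ?_
      simp only [Finset.mem_Icc] at hj
      rw [show m + 1 - j = (m - j) + 1 by omega, pow_succ]
      ring
    rw [key, show m + 1 - (m + 1) = 0 by omega, show m + 1 - 1 = m by omega]
    linear_combination lam * ih

lemma dsum (μ lam : ℝ) : ∀ m : ℕ,
    (μ - lam) * ∑ j ∈ Finset.Icc 0 m, μ ^ j * lam ^ (m + 1 - j)
      = lam * (μ ^ (m + 1) - lam ^ (m + 1)) := by
  intro m
  induction m with
  | zero => simp; ring
  | succ m ih =>
    rw [Finset.sum_Icc_succ_top (by omega : 0 ≤ m + 1)]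
    have key : ∑ j ∈ Finset.Icc 0 m, μ ^ j * lam ^ (m + 1 + 1 - j)
        = lam * ∑ j ∈ Finset.Icc 0 m, μ ^ j * lam ^ (m + 1 - j) := by
      rw [Finset.mul_sum]
      refine Finset.sum_congr rfl fun j hj => ?_
      simp only [Finset.mem_Icc] at hj
      rw [show m + 1 + 1 - j = (m + 1 - j) + 1 by omega, pow_succ]
      ring
    rw [key, show m + 1 + 1 - (m + 1) = 1 by omega]
    linear_combination lam * ih

lemma asum (μ lam : ℝ) : ∀ m : ℕ,
    (μ - lam) ^ 2 * ∑ j ∈ Finset.Icc 1 m,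
        μ ^ (j - 1) * ((((m + 1 : ℕ) : ℝ) - ((j : ℝ) + 1)) * μ + (j : ℝ) - 1 - ((m + 1 : ℕ) : ℝ))
          * lam ^ (m + 1 - j)
      = ((m : ℝ) * μ - 2 - (m : ℝ)) * (μ - lam) * lam * (μ ^ m - lam ^ m)
        + (1 - μ) * lam * ((m : ℝ) * μ ^ (m + 1) - ((m : ℝ) + 1) * μ ^ m * lam + lam ^ (m + 1)) := by
  intro m
  induction m with
  | zero => simp
  | succ m ih =>
    rw [Finset.sum_Icc_succ_top (by omega : 1 ≤ m + 1)]
    have key : ∑ j ∈ Finset.Icc 1 m,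
        μ ^ (j - 1) * ((((m + 1 + 1 : ℕ) : ℝ) - ((j : ℝ) + 1)) * μ + (j : ℝ) - 1 - ((m + 1 + 1 : ℕ) : ℝ))
          * lam ^ (m + 1 + 1 - j)
        = lam * ∑ j ∈ Finset.Icc 1 m,
            μ ^ (j - 1) * ((((m + 1 : ℕ) : ℝ) - ((j : ℝ) + 1)) * μ + (j : ℝ) - 1 - ((m + 1 : ℕ) : ℝ))
              * lam ^ (m + 1 - j)
          + (μ - 1) * lam ^ 2 * ∑ j ∈ Finset.Icc 1 m, μ ^ (j - 1) * lam ^ (m - j) := by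
      rw [Finset.mul_sum, Finset.mul_sum, ← Finset.sum_add_distrib]
      refine Finset.sum_congr rfl fun j hj => ?_
      simp only [Finset.mem_Icc] at hj
      rw [show m + 1 + 1 - j = (m - j) + 2 by omega, show m + 1 - j = (m - j) + 1 by omega]
      push_cast
      ring
    rw [key, show m + 1 + 1 - (m + 1) = 1 by omega, show m + 1 - 1 = m by omega]
    push_cast at ih ⊢
    linear_combination lam * ih + ((μ - 1) * lam ^ 2 * (μ - lam)) * sgeo μ lam m

theorem stmt_0 (T : ℕ) (hT : 1 ≤ T) (μ : ℝ) (hμ : μ ∈ Set.Ioo (0 : ℝ) 1)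
    (lam : ℝ) (hlam : lam ∈ Set.Ico (0 : ℝ) 1) (hne : lam ≠ μ) :
    ((1 / (μ - lam)) * (μ ^ T - ((T : ℝ) + 1) * lam ^ T + (lam / (μ - lam)) * (μ ^ T - lam ^ T))
        + lam ^ T * ((T : ℝ) + 1 - (T : ℝ) * lam) / (1 - lam) ^ 2)
      / ((μ ^ (T + 1) - lam ^ (T + 1)) / (μ - lam) + lam ^ (T + 1) / (1 - lam))
    = g T μ lam / ((1 - lam) * d T μ lam) := by
  obtain ⟨m, rfl⟩ : ∃ m, T = m + 1 := ⟨T - 1, by omega⟩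
  obtain ⟨hμ0, hμ1⟩ := hμ
  obtain ⟨hl0, hl1⟩ := hlam
  have h1 : μ - lam ≠ 0 := sub_ne_zero.mpr (Ne.symm hne)
  have h2 : (1 : ℝ) - lam ≠ 0 := sub_ne_zero.mpr (ne_of_gt hl1)
  have hA := asum μ lam m
  have hD := dsum μ lam m
  have hdpos : 0 < (1 - μ) * (∑ j ∈ Finset.Icc 0 m, μ ^ j * lam ^ (m + 1 - j)) + μ ^ (m + 1) := by
    have hs : 0 ≤ ∑ j ∈ Finset.Icc 0 m, μ ^ j * lam ^ (m + 1 - j) :=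
      Finset.sum_nonneg fun j _ => by positivity
    have := pow_pos hμ0 (m + 1)
    nlinarith
  have e1 : (∑ j ∈ Finset.Icc 1 m,
        μ ^ (j - 1) * ((((m + 1 : ℕ) : ℝ) - ((j : ℝ) + 1)) * μ + (j : ℝ) - 1 - ((m + 1 : ℕ) : ℝ))
          * lam ^ (m + 1 - j))
      = (((m : ℝ) * μ - 2 - (m : ℝ)) * (μ - lam) * lam * (μ ^ m - lam ^ m)
        + (1 - μ) * lam * ((m : ℝ) * μ ^ (m + 1) - ((m : ℝ) + 1) * μ ^ m * lam + lam ^ (m + 1)))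
        / (μ - lam) ^ 2 := by
    rw [eq_div_iff (pow_ne_zero 2 h1)]
    linear_combination hA
  have e2 : (∑ j ∈ Finset.Icc 0 m, μ ^ j * lam ^ (m + 1 - j))
      = lam * (μ ^ (m + 1) - lam ^ (m + 1)) / (μ - lam) := by
    rw [eq_div_iff h1]
    linear_combination hD
  have hDval : (μ ^ (m + 1 + 1) - lam ^ (m + 1 + 1)) / (μ - lam) + lam ^ (m + 1 + 1) / (1 - lam)
      = ((1 - μ) * (∑ j ∈ Finset.Icc 0 m, μ ^ j * lam ^ (m + 1 - j)) + μ ^ (m + 1)) / (1 - lam) := by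
    rw [e2]
    field_simp
    ring
  have hDne : (μ ^ (m + 1 + 1) - lam ^ (m + 1 + 1)) / (μ - lam) + lam ^ (m + 1 + 1) / (1 - lam) ≠ 0 := by
    rw [hDval]
    exact div_ne_zero (ne_of_gt hdpos) h2
  have hden : (1 - lam) * d (m + 1) μ lam ≠ 0 := by
    simp only [d, Nat.add_sub_cancel]
    exact mul_ne_zero h2 (ne_of_gt hdpos)
  rw [div_eq_div_iff hDne hden]
  simp only [g, d, Nat.add_sub_cancel, e1, e2]
  field_simp
  push_cast
  ring
end

section
/- For every threshold T ≥ 1, low service rate μ ∈ (0,1), and every λ ∈ [0,1), the delay function satisfies W(λ) > 1/(1−λ); equivalently, g(λ)/((1−λ)·d(λ)) > 1/(1−λ). -/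
noncomputable def Paux (m : ℕ) (μ x : ℝ) : ℝ := ∑ k ∈ Finset.range m, μ ^ k * x ^ (m - k)

noncomputable def Qaux (m : ℕ) (μ x : ℝ) : ℝ :=
  ∑ k ∈ Finset.range m, (k : ℝ) * μ ^ k * x ^ (m - k)

lemma Paux_succ (m : ℕ) (μ x : ℝ) : Paux (m + 1) μ x = x * Paux m μ x + μ ^ m * x := by
  rw [Paux, Finset.sum_range_succ, Paux, Finset.mul_sum]
  have h1 : m + 1 - m = 1 := by omega
  rw [h1, pow_one]
  congr 1
  apply Finset.sum_congr rfl
  intro i hi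
  rw [Finset.mem_range] at hi
  have h2 : m + 1 - i = (m - i) + 1 := by omega
  rw [h2, pow_succ]
  ring

lemma Qaux_succ (m : ℕ) (μ x : ℝ) :
    Qaux (m + 1) μ x = x * Qaux m μ x + (m : ℝ) * μ ^ m * x := by
  rw [Qaux, Finset.sum_range_succ, Qaux, Finset.mul_sum]
  have h1 : m + 1 - m = 1 := by omega
  rw [h1, pow_one]
  congr 1
  apply Finset.sum_congr rfl
  intro i hi
  rw [Finset.mem_range] at hi
  have h2 : m + 1 - i = (m - i) + 1 := by omega
  rw [h2, pow_succ]
  ring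

lemma tele1 (m : ℕ) (μ x : ℝ) :
    (μ - x) * Paux m μ x = μ ^ m * x - x ^ (m + 1) := by
  induction m with
  | zero => simp [Paux]
  | succ n ih =>
      rw [Paux_succ]
      linear_combination x * ih

lemma tele2 (m : ℕ) (μ x : ℝ) :
    (μ - x) * Qaux m μ x = ((m : ℝ) - 1) * μ ^ m * x - x * Paux m μ x + x ^ (m + 1) := by
  induction m with
  | zero => simp [Paux, Qaux]
  | succ n ih =>
      rw [Qaux_succ, Paux_succ]
      push_cast
      linear_combination x * ih

lemma key (m : ℕ) (μ x : ℝ) :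
    g (m + 1) μ x - d (m + 1) μ x
      = (1 - μ) * (1 - x) * (((m : ℝ) + 1) * Paux m μ x - Qaux m μ x + μ ^ m) := by
  have hIcc0 : Finset.Icc 0 m = Finset.range (m + 1) := by
    ext k; simp [Nat.lt_succ_iff]
  have hIcc1 : Finset.Icc 1 m = Finset.Ico 1 (m + 1) := by
    ext k; simp [Nat.lt_succ_iff]
  have hE2 : ∑ j ∈ Finset.Icc 0 m, μ ^ j * x ^ (m + 1 - j) = Paux (m + 1) μ x := by
    rw [hIcc0, Paux]
  have hE1 : ∑ j ∈ Finset.Icc 1 m,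
      μ ^ (j - 1) * ((((m + 1 : ℕ) : ℝ) - ((j : ℝ) + 1)) * μ + (j : ℝ) - 1 - ((m + 1 : ℕ) : ℝ))
        * x ^ (m + 1 - j)
      = (((m : ℝ) - 1) * μ - (m : ℝ) - 1) * Paux m μ x + (1 - μ) * Qaux m μ x := by
    rw [hIcc1, Finset.sum_Ico_eq_sum_range]
    have h3 : m + 1 - 1 = m := by omega
    rw [h3, Paux, Qaux, Finset.mul_sum, Finset.mul_sum, ← Finset.sum_add_distrib]
    apply Finset.sum_congr rfl
    intro i hi
    rw [Finset.mem_range] at hi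
    have h4 : 1 + i - 1 = i := by omega
    have h5 : m + 1 - (1 + i) = m - i := by omega
    rw [h4, h5]
    push_cast
    ring
  rw [g, d]
  simp only [Nat.add_sub_cancel]
  rw [hE1, hE2, Paux_succ]
  push_cast
  linear_combination (1 - μ) * ((1 - (m : ℝ)) * tele1 m μ x + tele2 m μ x)

theorem stmt_1 (T : ℕ) (hT : 1 ≤ T) (μ : ℝ) (hμ : μ ∈ Set.Ioo (0 : ℝ) 1)
    (lam : ℝ) (hlam : lam ∈ Set.Ico (0 : ℝ) 1) :
    W T μ lam > 1 / (1 - lam) := by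
  obtain ⟨hμ0, hμ1⟩ := hμ
  obtain ⟨hx0, hx1⟩ := hlam
  obtain ⟨m, rfl⟩ : ∃ m, T = m + 1 := ⟨T - 1, by omega⟩
  have hPQ : 0 ≤ ((m : ℝ) + 1) * Paux m μ lam - Qaux m μ lam := by
    rw [Paux, Qaux, Finset.mul_sum, ← Finset.sum_sub_distrib]
    apply Finset.sum_nonneg
    intro k hk
    rw [Finset.mem_range] at hk
    have hk' : (k : ℝ) ≤ m := by exact_mod_cast hk.le
    have h1 : 0 ≤ μ ^ k * lam ^ (m - k) :=
      mul_nonneg (pow_nonneg hμ0.le _) (pow_nonneg hx0 _)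
    nlinarith
  have hA : 0 < ((m : ℝ) + 1) * Paux m μ lam - Qaux m μ lam + μ ^ m := by
    have := pow_pos hμ0 m; linarith
  have hgd : d (m + 1) μ lam < g (m + 1) μ lam := by
    have hk := key m μ lam
    nlinarith [mul_pos (mul_pos (by linarith : (0:ℝ) < 1 - μ) (by linarith : (0:ℝ) < 1 - lam)) hA]
  have hd : 0 < d (m + 1) μ lam := by
    rw [d]
    have hsum : 0 ≤ ∑ j ∈ Finset.Icc 0 (m + 1 - 1), μ ^ j * lam ^ (m + 1 - j) := by
      apply Finset.sum_nonneg
      intro j hj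
      exact mul_nonneg (pow_nonneg hμ0.le _) (pow_nonneg hx0 _)
    have := pow_pos hμ0 (m + 1)
    nlinarith
  rw [W, gt_iff_lt, div_lt_div_iff₀ (by linarith) (mul_pos (by linarith) hd)]
  nlinarith
end

section
/- (Lemma 1) For every threshold T ≥ 1, low service rate μ ∈ (0,1), and reward R with R > 1/μ, the equation W(λ) = R has at least one solution λ ∈ (0,1). -/
lemma g_zero (T : ℕ) (hT : 1 ≤ T) (μ : ℝ) : g T μ 0 = μ ^ (T - 1) := by
  unfold g
  have h : ∀ j ∈ Finset.Icc 1 (T - 1),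
      μ ^ (j - 1) * (((T : ℝ) - ((j : ℝ) + 1)) * μ + (j : ℝ) - 1 - (T : ℝ)) * (0:ℝ) ^ (T - j)
        = 0 := by
    intro j hj
    rw [Finset.mem_Icc] at hj
    rw [zero_pow (by omega)]
    ring
  rw [Finset.sum_congr rfl h, Finset.sum_const_zero, zero_pow (by omega)]
  ring

lemma d_zero (T : ℕ) (hT : 1 ≤ T) (μ : ℝ) : d T μ 0 = μ ^ T := by
  unfold d
  have h : ∀ j ∈ Finset.Icc 0 (T - 1), μ ^ j * (0:ℝ) ^ (T - j) = 0 := by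
    intro j hj
    rw [Finset.mem_Icc] at hj
    rw [zero_pow (by omega)]
    ring
  rw [Finset.sum_congr rfl h, Finset.sum_const_zero]
  ring

lemma g_one (T : ℕ) (hT : 1 ≤ T) (μ : ℝ) : g T μ 1 = 1 := by
  unfold g
  have hIcc : Finset.Icc 1 (T - 1) = Finset.Ico 1 T := by
    rw [← Finset.Ico_add_one_right_eq_Icc]
    congr 1
    omega
  rw [hIcc, Finset.sum_Ico_eq_sum_range]
  simp only [one_pow, mul_one]
  set h : ℕ → ℝ := fun i => ((T : ℝ) - 1 - i) * μ ^ i with hh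
  have key : ∀ i ∈ Finset.range (T - 1),
      μ ^ (1 + i - 1) * (((T : ℝ) - (((1 + i : ℕ) : ℝ) + 1)) * μ + ((1 + i : ℕ) : ℝ) - 1 - (T : ℝ))
        = (h (i + 1) - h i) - μ ^ i := by
    intro i hi
    have : (1 + i - 1) = i := by omega
    rw [this]
    simp only [hh]
    push_cast
    ring
  rw [Finset.sum_congr rfl key, Finset.sum_sub_distrib, Finset.sum_range_sub]
  have hT1 : ((T - 1 : ℕ) : ℝ) = (T : ℝ) - 1 := by
    push_cast [hT]; ring
  have hgeom : (μ - 1) * ∑ i ∈ Finset.range (T - 1), μ ^ i = μ ^ (T - 1) - 1 := by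
    rw [mul_comm]; exact geom_sum_mul μ (T - 1)
  have hpow : μ ^ T = μ ^ (T - 1) * μ := by
    rw [← pow_succ]; congr 1; omega
  simp only [hh, hT1]
  linear_combination -hgeom

lemma d_pos (T : ℕ) (μ : ℝ) (hμ0 : 0 < μ) (hμ1 : μ < 1) (x : ℝ) (hx : 0 ≤ x) :
    0 < d T μ x := by
  unfold d
  have hs : 0 ≤ ∑ j ∈ Finset.Icc 0 (T - 1), μ ^ j * x ^ (T - j) :=
    Finset.sum_nonneg fun j _ => by positivity
  have h1 : 0 ≤ (1 - μ) * ∑ j ∈ Finset.Icc 0 (T - 1), μ ^ j * x ^ (T - j) :=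
    mul_nonneg (by linarith) hs
  have h2 : 0 < μ ^ T := pow_pos hμ0 T
  linarith

theorem stmt_3 (T : ℕ) (hT : 1 ≤ T) (μ : ℝ) (hμ : μ ∈ Set.Ioo (0 : ℝ) 1)
    (R : ℝ) (hR : R > 1 / μ) :
    ∃ lam ∈ Set.Ioo (0 : ℝ) 1, W T μ lam = R := by
  obtain ⟨hμ0, hμ1⟩ := hμ
  set f : ℝ → ℝ := fun x => g T μ x - R * ((1 - x) * d T μ x) with hf
  have hcont : ContinuousOn f (Set.Icc (0:ℝ) 1) := by
    apply Continuous.continuousOn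
    unfold f g d
    fun_prop
  have hRμ : 1 < R * μ := by
    rw [gt_iff_lt, div_lt_iff₀ hμ0] at hR
    linarith
  have hf0 : f 0 < 0 := by
    simp only [hf, g_zero T hT μ, d_zero T hT μ, sub_zero, one_mul]
    have hpow : μ ^ T = μ ^ (T - 1) * μ := by
      rw [← pow_succ]; congr 1; omega
    have h1 : 0 < μ ^ (T - 1) := pow_pos hμ0 _
    have h2 : μ ^ (T - 1) < R * μ ^ T := by
      rw [hpow]
      nlinarith
    linarith
  have hf1 : (0:ℝ) < f 1 := by
    simp [hf, g_one T hT μ]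
  have hsub := intermediate_value_Ioo (by norm_num : (0:ℝ) ≤ 1) hcont
  obtain ⟨lam, hlam, hflam⟩ := hsub (Set.mem_Ioo.mpr ⟨hf0, hf1⟩)
  refine ⟨lam, hlam, ?_⟩
  obtain ⟨hl0, hl1⟩ := hlam
  have hd : 0 < d T μ lam := d_pos T μ hμ0 hμ1 lam (le_of_lt hl0)
  have hne : (1 - lam) * d T μ lam ≠ 0 := by
    have : 0 < (1 - lam) * d T μ lam := mul_pos (by linarith) hd
    linarith
  unfold W
  rw [div_eq_iff hne]
  simp only [hf] at hflam
  linarith [hflam]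
end

section
/- (Proposition 1.ii) For every threshold T ≥ 2, low service rate μ ∈ (0,1), and reward R ≥ 1, the polynomial equation H(λ) = 0 has at most three roots in the open interval (0,1); that is, the set {λ ∈ (0,1) : H(λ) = 0} has at most three elements. -/
noncomputable def H (T : ℕ) (μ R : ℝ) (x : ℝ) : ℝ :=
  -R * (1 - μ) * x ^ (T + 1) + (1 - μ) * (R * (1 - μ) + (T : ℝ) - 1) * x ^ T
    + (1 - μ) * ∑ j ∈ Finset.Icc 2 (T - 1),
        μ ^ (T - 1 - j) * (-R * μ ^ 2 + (R + (j : ℝ) - 1) * μ - ((j : ℝ) + 1)) * x ^ j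
    + μ ^ (T - 2) * (-2 * R * μ ^ 2 + (R + 2) * μ - 2) * x + μ ^ (T - 1) * (R * μ - 1)

namespace Stmt6

/-- `(x-μ)^2 * H (n+2) μ R x` in expanded sparse form. -/
noncomputable def PP (n : ℕ) (μ R x : ℝ) : ℝ :=
  (-R*(1-μ))*x^(n+5) + (R+((n:ℝ)+1)*(1-μ)-R*μ^2)*x^(n+4)
    + (-(((n:ℝ)+2)*(1-μ^2)+R*μ*(1-μ)))*x^(n+3) + (((n:ℝ)+3)*μ*(1-μ))*x^(n+2)
    + (-R*μ^(n+3))*x^3 + (μ^(n+3)*(2*R+R*μ-1))*x^2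
    + (μ^(n+3)*(2-R-2*R*μ))*x + μ^(n+3)*(R*μ-1)

noncomputable def PP1 (n : ℕ) (μ R x : ℝ) : ℝ :=
  ((n:ℝ)+5)*(-R*(1-μ))*x^(n+4) + ((n:ℝ)+4)*(R+((n:ℝ)+1)*(1-μ)-R*μ^2)*x^(n+3)
    + ((n:ℝ)+3)*(-(((n:ℝ)+2)*(1-μ^2)+R*μ*(1-μ)))*x^(n+2) + ((n:ℝ)+2)*(((n:ℝ)+3)*μ*(1-μ))*x^(n+1)
    + 3*(-R*μ^(n+3))*x^2 + 2*(μ^(n+3)*(2*R+R*μ-1))*x + μ^(n+3)*(2-R-2*R*μ)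

noncomputable def PP2 (n : ℕ) (μ R x : ℝ) : ℝ :=
  ((n:ℝ)+5)*((n:ℝ)+4)*(-R*(1-μ))*x^(n+3) + ((n:ℝ)+4)*((n:ℝ)+3)*(R+((n:ℝ)+1)*(1-μ)-R*μ^2)*x^(n+2)
    + ((n:ℝ)+3)*((n:ℝ)+2)*(-(((n:ℝ)+2)*(1-μ^2)+R*μ*(1-μ)))*x^(n+1)
    + ((n:ℝ)+2)*((n:ℝ)+1)*(((n:ℝ)+3)*μ*(1-μ))*x^n
    + 6*(-R*μ^(n+3))*x + 2*(μ^(n+3)*(2*R+R*μ-1))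

noncomputable def G1 (n : ℕ) (μ R x : ℝ) : ℝ :=
  (R+((n:ℝ)+1)*(1-μ)-R*μ^2)*x^(n+4) + 2*(-(((n:ℝ)+2)*(1-μ^2)+R*μ*(1-μ)))*x^(n+3)
    + 3*(((n:ℝ)+3)*μ*(1-μ))*x^(n+2) + ((n:ℝ)+2)*(-R*μ^(n+3))*x^3
    + ((n:ℝ)+3)*(μ^(n+3)*(2*R+R*μ-1))*x^2 + ((n:ℝ)+4)*(μ^(n+3)*(2-R-2*R*μ))*x
    + ((n:ℝ)+5)*(μ^(n+3)*(R*μ-1))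

noncomputable def G1D (n : ℕ) (μ R x : ℝ) : ℝ :=
  ((n:ℝ)+4)*(R+((n:ℝ)+1)*(1-μ)-R*μ^2)*x^(n+3) + 2*((n:ℝ)+3)*(-(((n:ℝ)+2)*(1-μ^2)+R*μ*(1-μ)))*x^(n+2)
    + 3*((n:ℝ)+2)*(((n:ℝ)+3)*μ*(1-μ))*x^(n+1) + 3*((n:ℝ)+2)*(-R*μ^(n+3))*x^2
    + 2*((n:ℝ)+3)*(μ^(n+3)*(2*R+R*μ-1))*x + ((n:ℝ)+4)*(μ^(n+3)*(2-R-2*R*μ))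

noncomputable def G2 (n : ℕ) (μ R x : ℝ) : ℝ :=
  2*(-(((n:ℝ)+2)*(1-μ^2)+R*μ*(1-μ)))*x^(n+3) + 6*(((n:ℝ)+3)*μ*(1-μ))*x^(n+2)
    + ((n:ℝ)+1)*((n:ℝ)+2)*(-R*μ^(n+3))*x^3 + ((n:ℝ)+2)*((n:ℝ)+3)*(μ^(n+3)*(2*R+R*μ-1))*x^2
    + ((n:ℝ)+3)*((n:ℝ)+4)*(μ^(n+3)*(2-R-2*R*μ))*x + ((n:ℝ)+4)*((n:ℝ)+5)*(μ^(n+3)*(R*μ-1))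

noncomputable def G2D (n : ℕ) (μ R x : ℝ) : ℝ :=
  2*((n:ℝ)+3)*(-(((n:ℝ)+2)*(1-μ^2)+R*μ*(1-μ)))*x^(n+2) + 6*((n:ℝ)+2)*(((n:ℝ)+3)*μ*(1-μ))*x^(n+1)
    + 3*((n:ℝ)+1)*((n:ℝ)+2)*(-R*μ^(n+3))*x^2 + 2*((n:ℝ)+2)*((n:ℝ)+3)*(μ^(n+3)*(2*R+R*μ-1))*x
    + ((n:ℝ)+3)*((n:ℝ)+4)*(μ^(n+3)*(2-R-2*R*μ))

noncomputable def G3 (n : ℕ) (μ R x : ℝ) : ℝ :=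
  6*(((n:ℝ)+3)*μ*(1-μ))*x^(n+2) + (n:ℝ)*((n:ℝ)+1)*((n:ℝ)+2)*(-R*μ^(n+3))*x^3
    + ((n:ℝ)+1)*((n:ℝ)+2)*((n:ℝ)+3)*(μ^(n+3)*(2*R+R*μ-1))*x^2
    + ((n:ℝ)+2)*((n:ℝ)+3)*((n:ℝ)+4)*(μ^(n+3)*(2-R-2*R*μ))*x
    + ((n:ℝ)+3)*((n:ℝ)+4)*((n:ℝ)+5)*(μ^(n+3)*(R*μ-1))

noncomputable def G3D (n : ℕ) (μ R x : ℝ) : ℝ :=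
  6*((n:ℝ)+2)*(((n:ℝ)+3)*μ*(1-μ))*x^(n+1) + 3*(n:ℝ)*((n:ℝ)+1)*((n:ℝ)+2)*(-R*μ^(n+3))*x^2
    + 2*((n:ℝ)+1)*((n:ℝ)+2)*((n:ℝ)+3)*(μ^(n+3)*(2*R+R*μ-1))*x
    + ((n:ℝ)+2)*((n:ℝ)+3)*((n:ℝ)+4)*(μ^(n+3)*(2-R-2*R*μ))

noncomputable def G4 (n : ℕ) (μ R x : ℝ) : ℝ :=
  ((n:ℝ)-1)*(n:ℝ)*((n:ℝ)+1)*((n:ℝ)+2)*(-R*μ^(n+3))*x^3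
    + (n:ℝ)*((n:ℝ)+1)*((n:ℝ)+2)*((n:ℝ)+3)*(μ^(n+3)*(2*R+R*μ-1))*x^2
    + ((n:ℝ)+1)*((n:ℝ)+2)*((n:ℝ)+3)*((n:ℝ)+4)*(μ^(n+3)*(2-R-2*R*μ))*x
    + ((n:ℝ)+2)*((n:ℝ)+3)*((n:ℝ)+4)*((n:ℝ)+5)*(μ^(n+3)*(R*μ-1))

noncomputable def AA (n : ℕ) (x : ℝ) : ℝ :=
  ((n:ℝ)+2)*((n:ℝ)+3)*((n:ℝ)+4)*((n:ℝ)+5) - 2*(((n:ℝ)+1)*((n:ℝ)+2)*((n:ℝ)+3)*((n:ℝ)+4))*x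
    + ((n:ℝ)*((n:ℝ)+1)*((n:ℝ)+2)*((n:ℝ)+3))*x^2

noncomputable def BB (n : ℕ) (x : ℝ) : ℝ :=
  -(((n:ℝ)+1)*((n:ℝ)+2)*((n:ℝ)+3)*((n:ℝ)+4)) + 2*((n:ℝ)*((n:ℝ)+1)*((n:ℝ)+2)*((n:ℝ)+3))*x
    - (((n:ℝ)-1)*(n:ℝ)*((n:ℝ)+1)*((n:ℝ)+2))*x^2

noncomputable def AAD (n : ℕ) (x : ℝ) : ℝ :=
  -2*(((n:ℝ)+1)*((n:ℝ)+2)*((n:ℝ)+3)*((n:ℝ)+4)) + 2*((n:ℝ)*((n:ℝ)+1)*((n:ℝ)+2)*((n:ℝ)+3))*x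

noncomputable def BBD (n : ℕ) (x : ℝ) : ℝ :=
  2*((n:ℝ)*((n:ℝ)+1)*((n:ℝ)+2)*((n:ℝ)+3)) - 2*(((n:ℝ)-1)*(n:ℝ)*((n:ℝ)+1)*((n:ℝ)+2))*x

/-! ### Algebraic identities -/

theorem hg1 (n : ℕ) (μ R x : ℝ) :
    G1 n μ R x = ((n:ℝ)+5) * PP n μ R x - x * PP1 n μ R x := by
  simp only [G1, PP, PP1]; ring

theorem hg1D (n : ℕ) (μ R x : ℝ) :
    G1D n μ R x = ((n:ℝ)+4) * PP1 n μ R x - x * PP2 n μ R x := by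
  simp only [G1D, PP1, PP2]; ring

theorem hg2 (n : ℕ) (μ R x : ℝ) :
    G2 n μ R x = ((n:ℝ)+4) * G1 n μ R x - x * G1D n μ R x := by
  simp only [G2, G1, G1D]; ring

theorem hg3 (n : ℕ) (μ R x : ℝ) :
    G3 n μ R x = ((n:ℝ)+3) * G2 n μ R x - x * G2D n μ R x := by
  simp only [G3, G2, G2D]; ring

theorem hg4 (n : ℕ) (μ R x : ℝ) :
    G4 n μ R x = ((n:ℝ)+2) * G3 n μ R x - x * G3D n μ R x := by
  simp only [G4, G3, G3D]; ring

theorem hQ (n : ℕ) (μ R x : ℝ) :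
    G4 n μ R x = μ^(n+3) * ((R*μ-1) * AA n x + R * x * BB n x) := by
  simp only [G4, AA, BB]; ring

/-- Recurrence for `H` in the threshold parameter. -/
theorem Hrec (n : ℕ) (μ R x : ℝ) :
    H (n+3) μ R x = μ * H (n+2) μ R x
      + (1-μ) * x^(n+2) * (-R*x^2 + (R+(n:ℝ)+2)*x - ((n:ℝ)+3)) := by
  simp only [H]
  rw [show n+3-1 = (n+1)+1 from rfl, show n+2-1 = n+1 from rfl,
    show n+3-2 = n+1 from rfl, show n+2-2 = n from rfl]
  rw [Finset.sum_Icc_succ_top (by omega : 2 ≤ (n+1)+1)]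
  have hsum : (∑ j ∈ Finset.Icc 2 (n+1),
      μ ^ (n+1+1-j) * (-R * μ ^ 2 + (R + (j : ℝ) - 1) * μ - ((j : ℝ) + 1)) * x ^ j)
      = μ * ∑ j ∈ Finset.Icc 2 (n+1),
      μ ^ (n+1-j) * (-R * μ ^ 2 + (R + (j : ℝ) - 1) * μ - ((j : ℝ) + 1)) * x ^ j := by
    rw [Finset.mul_sum]
    refine Finset.sum_congr rfl (fun j hj => ?_)
    have hj2 : j ≤ n + 1 := (Finset.mem_Icc.mp hj).2
    have : n+1+1-j = (n+1-j)+1 := by omega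
    rw [this, pow_succ]; ring
  rw [hsum]
  rw [show n+1+1 - (n+1+1) = 0 from by omega]
  push_cast
  ring

/-- `(x-μ)^2 * H (n+2) = PP n`. -/
theorem HP (n : ℕ) (μ R : ℝ) : ∀ x : ℝ, (x-μ)^2 * H (n+2) μ R x = PP n μ R x := by
  induction n with
  | zero =>
    intro x
    simp only [H, PP]
    rw [show 2-1 = 1 from rfl, show Finset.Icc 2 1 = ∅ from rfl]
    simp
    push_cast
    ring
  | succ n ih =>
    intro x
    have h1 : PP (n+1) μ R x = μ * PP n μ R x
        + (1-μ) * x^(n+2) * (x-μ)^2 * (-R*x^2 + (R+(n:ℝ)+2)*x - ((n:ℝ)+3)) := by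
      simp only [PP]; push_cast; ring
    rw [show n+1+2 = n+3 from rfl, Hrec n μ R x, h1, ← ih x]
    ring

/-- `PP1` evaluates to zero at `μ`. -/
theorem PP1mu (n : ℕ) (μ R : ℝ) : PP1 n μ R μ = 0 := by
  induction n with
  | zero => simp only [PP1]; push_cast; ring
  | succ n ih =>
    have h1 : PP1 (n+1) μ R μ = μ * PP1 n μ R μ
        + (1-μ) * (((n:ℝ)+2)*μ^(n+1)*(μ-μ)^2*(-R*μ^2 + (R+(n:ℝ)+2)*μ - ((n:ℝ)+3))
          + 2*μ^(n+2)*(μ-μ)*(-R*μ^2 + (R+(n:ℝ)+2)*μ - ((n:ℝ)+3))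
          + μ^(n+2)*(μ-μ)^2*(-2*R*μ + (R+(n:ℝ)+2))) := by
      simp only [PP1]; push_cast; ring
    rw [h1, ih]; ring

/-- `PP2` at `μ` equals `2 * H (n+2) μ R μ`. -/
theorem PP2mu (n : ℕ) (μ R : ℝ) : PP2 n μ R μ = 2 * H (n+2) μ R μ := by
  induction n with
  | zero =>
    simp only [H, PP2]
    rw [show 2-1 = 1 from rfl, show Finset.Icc 2 1 = ∅ from rfl]
    simp
    push_cast
    ring
  | succ n ih =>
    have h1 : PP2 (n+1) μ R μ = μ * PP2 n μ R μ
        + (1-μ) * (2*μ^(n+2)*(-R*μ^2 + (R+(n:ℝ)+2)*μ - ((n:ℝ)+3))) := by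
      have h2 : ∀ x : ℝ, PP2 (n+1) μ R x = μ * PP2 n μ R x
          + (1-μ) * (((n:ℝ)+2)*((n:ℝ)+1)*x^n*(x-μ)^2*(-R*x^2 + (R+(n:ℝ)+2)*x - ((n:ℝ)+3))
            + ((n:ℝ)+2)*x^(n+1)*2*(x-μ)*(-R*x^2 + (R+(n:ℝ)+2)*x - ((n:ℝ)+3))
            + ((n:ℝ)+2)*x^(n+1)*(x-μ)^2*(-2*R*x + (R+(n:ℝ)+2))
            + 2*((n:ℝ)+2)*x^(n+1)*(x-μ)*(-R*x^2 + (R+(n:ℝ)+2)*x - ((n:ℝ)+3))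
            + 2*x^(n+2)*(-R*x^2 + (R+(n:ℝ)+2)*x - ((n:ℝ)+3))
            + 2*x^(n+2)*(x-μ)*(-2*R*x + (R+(n:ℝ)+2))
            + ((n:ℝ)+2)*x^(n+1)*(x-μ)^2*(-2*R*x + (R+(n:ℝ)+2))
            + 2*x^(n+2)*(x-μ)*(-2*R*x + (R+(n:ℝ)+2))
            + x^(n+2)*(x-μ)^2*(-2*R)) := by
        intro x; simp only [PP2]; push_cast; ring
      rw [h2 μ]; ring
    rw [h1, ih, show n+1+2 = n+3 from rfl, Hrec n μ R μ]
    ring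

theorem hdt (c : ℝ) (m : ℕ) (x : ℝ) :
    HasDerivAt (fun y : ℝ => c * y ^ m) (c * (m:ℝ) * x ^ (m-1)) x := by
  simpa [mul_assoc] using (hasDerivAt_pow m x).const_mul c

theorem hdPP (n : ℕ) (μ R x : ℝ) :
    HasDerivAt (fun y => PP n μ R y) (PP1 n μ R x) x := by
  simp only [PP]
  have h := ((((((((hdt ((-R*(1-μ))) (n+5) x).add (hdt ((R+((n:ℝ)+1)*(1-μ)-R*μ^2)) (n+4) x)).add (hdt ((-(((n:ℝ)+2)*(1-μ^2)+R*μ*(1-μ)))) (n+3) x)).add (hdt ((((n:ℝ)+3)*μ*(1-μ))) (n+2) x)).add (hdt ((-R*μ^(n+3))) (3) x)).add (hdt ((μ^(n+3)*(2*R+R*μ-1))) (2) x)).add ((hasDerivAt_id x).const_mul ((μ^(n+3)*(2-R-2*R*μ))))).add (hasDerivAt_const x ((μ^(n+3)*(R*μ-1)))))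
  refine h.congr_deriv ?_
  simp only [PP1]
  push_cast
  ring

theorem hdG1 (n : ℕ) (μ R x : ℝ) :
    HasDerivAt (fun y => G1 n μ R y) (G1D n μ R x) x := by
  simp only [G1]
  have h := (((((((hdt ((R+((n:ℝ)+1)*(1-μ)-R*μ^2)) (n+4) x).add (hdt (2*(-(((n:ℝ)+2)*(1-μ^2)+R*μ*(1-μ)))) (n+3) x)).add (hdt (3*(((n:ℝ)+3)*μ*(1-μ))) (n+2) x)).add (hdt (((n:ℝ)+2)*(-R*μ^(n+3))) (3) x)).add (hdt (((n:ℝ)+3)*(μ^(n+3)*(2*R+R*μ-1))) (2) x)).add ((hasDerivAt_id x).const_mul (((n:ℝ)+4)*(μ^(n+3)*(2-R-2*R*μ))))).add (hasDerivAt_const x (((n:ℝ)+5)*(μ^(n+3)*(R*μ-1)))))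
  refine h.congr_deriv ?_
  simp only [G1D]
  push_cast
  ring

theorem hdG2 (n : ℕ) (μ R x : ℝ) :
    HasDerivAt (fun y => G2 n μ R y) (G2D n μ R x) x := by
  simp only [G2]
  have h := ((((((hdt (2*(-(((n:ℝ)+2)*(1-μ^2)+R*μ*(1-μ)))) (n+3) x).add (hdt (6*(((n:ℝ)+3)*μ*(1-μ))) (n+2) x)).add (hdt (((n:ℝ)+1)*((n:ℝ)+2)*(-R*μ^(n+3))) (3) x)).add (hdt (((n:ℝ)+2)*((n:ℝ)+3)*(μ^(n+3)*(2*R+R*μ-1))) (2) x)).add ((hasDerivAt_id x).const_mul (((n:ℝ)+3)*((n:ℝ)+4)*(μ^(n+3)*(2-R-2*R*μ))))).add (hasDerivAt_const x (((n:ℝ)+4)*((n:ℝ)+5)*(μ^(n+3)*(R*μ-1)))))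
  refine h.congr_deriv ?_
  simp only [G2D]
  push_cast
  ring

theorem hdG3 (n : ℕ) (μ R x : ℝ) :
    HasDerivAt (fun y => G3 n μ R y) (G3D n μ R x) x := by
  simp only [G3]
  have h := (((((hdt (6*(((n:ℝ)+3)*μ*(1-μ))) (n+2) x).add (hdt ((n:ℝ)*((n:ℝ)+1)*((n:ℝ)+2)*(-R*μ^(n+3))) (3) x)).add (hdt (((n:ℝ)+1)*((n:ℝ)+2)*((n:ℝ)+3)*(μ^(n+3)*(2*R+R*μ-1))) (2) x)).add ((hasDerivAt_id x).const_mul (((n:ℝ)+2)*((n:ℝ)+3)*((n:ℝ)+4)*(μ^(n+3)*(2-R-2*R*μ))))).add (hasDerivAt_const x (((n:ℝ)+3)*((n:ℝ)+4)*((n:ℝ)+5)*(μ^(n+3)*(R*μ-1)))))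
  refine h.congr_deriv ?_
  simp only [G3D]
  push_cast
  ring

/-! ### Rolle step -/

theorem rolle_step (f fD g : ℝ → ℝ) (m : ℕ) (hm : 1 ≤ m)
    (hf : ∀ x : ℝ, HasDerivAt f (fD x) x)
    (hg : ∀ x : ℝ, g x = (m:ℝ) * f x - x * fD x)
    {a b : ℝ} (ha : 0 < a) (hab : a < b)
    (hfa : f a = 0) (hfb : f b = 0) :
    ∃ c, a < c ∧ c < b ∧ g c = 0 := by
  set F : ℝ → ℝ := fun y => f y / y ^ m with hF
  set FD : ℝ → ℝ := fun y => (fD y * y ^ m - f y * ((m:ℝ) * y ^ (m-1))) / (y ^ m) ^ 2 with hFD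
  have hder : ∀ y : ℝ, y ≠ 0 → HasDerivAt F (FD y) y := by
    intro y hy
    exact (hf y).div (hasDerivAt_pow m y) (pow_ne_zero m hy)
  have hcont : ContinuousOn F (Set.Icc a b) := by
    intro y hy
    have hy0 : y ≠ 0 := by have := hy.1; intro h; rw [h] at this; linarith
    exact (hder y hy0).continuousAt.continuousWithinAt
  have hFab : F a = F b := by simp [hF, hfa, hfb]
  obtain ⟨c, hc, hc0⟩ := exists_hasDerivAt_eq_zero hab hcont hFab
    (fun x hx => hder x (by have := hx.1; intro h; rw [h] at this; linarith))
  have hcpos : 0 < c := ha.trans hc.1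
  refine ⟨c, hc.1, hc.2, ?_⟩
  have hnum : fD c * c ^ m - f c * ((m:ℝ) * c ^ (m-1)) = 0 := by
    have hden : ((c:ℝ) ^ m) ^ 2 ≠ 0 := pow_ne_zero _ (pow_ne_zero _ hcpos.ne')
    have := hc0
    rw [hFD] at this
    exact (div_eq_zero_iff.mp this).resolve_right hden
  have hpow : c ^ m = c * c ^ (m-1) := by
    conv_lhs => rw [show m = (m-1)+1 by omega]
    rw [pow_succ]; ring
  have key : c ^ (m-1) * (c * fD c - (m:ℝ) * f c) = 0 := by
    calc c ^ (m-1) * (c * fD c - (m:ℝ) * f c)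
        = fD c * c ^ m - f c * ((m:ℝ) * c ^ (m-1)) := by rw [hpow]; ring
      _ = 0 := hnum
  rcases mul_eq_zero.mp key with h | h
  · exact absurd h (pow_ne_zero _ hcpos.ne')
  · rw [hg c]; linarith

/-! ### Positivity facts -/

theorem AApos (n : ℕ) {x : ℝ} (hx0 : 0 < x) (hx1 : x < 1) : 0 < AA n x := by
  have key : AA n x = ((n:ℝ)+2)*((n:ℝ)+3) *
      (((n:ℝ)+1)*(n:ℝ)*(x-1)^2 + (8*((n:ℝ)+1)*(1-x) + 12)) := by
    simp only [AA]; ring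
  rw [key]
  have hn : (0:ℝ) ≤ (n:ℝ) := Nat.cast_nonneg n
  have h1 : (0:ℝ) ≤ ((n:ℝ)+1)*(n:ℝ)*(x-1)^2 := by positivity
  have h2 : (0:ℝ) ≤ 8*((n:ℝ)+1)*(1-x) := by
    apply mul_nonneg (by positivity); linarith
  have : (0:ℝ) < ((n:ℝ)+2)*((n:ℝ)+3) := by positivity
  nlinarith

theorem BBneg (n : ℕ) {x : ℝ} (hx0 : 0 < x) (hx1 : x < 1) : BB n x < 0 := by
  have key : -BB n x = ((n:ℝ)+1)*((n:ℝ)+2) *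
      ((n:ℝ)*((n:ℝ)-1)*(x-1)^2 + (8*(n:ℝ)*(1-x) + 12)) := by
    simp only [BB]; ring
  have hn : (0:ℝ) ≤ (n:ℝ) := Nat.cast_nonneg n
  have hnn : (0:ℝ) ≤ (n:ℝ)*((n:ℝ)-1) := by
    rcases Nat.eq_zero_or_pos n with h | h
    · simp [h]
    · have : (1:ℝ) ≤ (n:ℝ) := by exact_mod_cast h
      nlinarith
  have h1 : (0:ℝ) ≤ (n:ℝ)*((n:ℝ)-1)*(x-1)^2 := mul_nonneg hnn (sq_nonneg _)
  have h2 : (0:ℝ) ≤ 8*(n:ℝ)*(1-x) := by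
    apply mul_nonneg (by positivity); linarith
  have h3 : (0:ℝ) < ((n:ℝ)+1)*((n:ℝ)+2) := by positivity
  nlinarith

/-- The numerator of the derivative of `z ↦ R*z*(-BB z)/AA z` is positive on `(0,1)`. -/
theorem NUMpos (n : ℕ) {R : ℝ} (hR : 1 ≤ R) {z : ℝ} (hz0 : 0 < z) (hz1 : z < 1) :
    0 < (R*(-BB n z) + R*z*(-BBD n z)) * AA n z - (R*z*(-BB n z)) * AAD n z := by
  have key : (R*(-BB n z) + R*z*(-BBD n z)) * AA n z - (R*z*(-BB n z)) * AAD n z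
      = R*((n:ℝ)+2)^2*((n:ℝ)+3)*((n:ℝ)+1) *
        (240 + 240*(n:ℝ)*(1-z) + 8*(n:ℝ)*(1-z)^2 + 16*(n:ℝ)*(1-z)^2*(1-(1-z))
          + (n:ℝ)^2*(1-z)^2*(96-(1-z)^2) + 16*(n:ℝ)^3*(1-z)^3 + (n:ℝ)^4*(1-z)^4) := by
    simp only [AA, BB, AAD, BBD]; ring
  rw [key]
  have hn : (0:ℝ) ≤ (n:ℝ) := Nat.cast_nonneg n
  have hy0 : (0:ℝ) < 1 - z := by linarith
  have hy1 : (0:ℝ) < 1-(1-z) := by linarith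
  have h96 : (0:ℝ) < 96-(1-z)^2 := by nlinarith
  have hpre : (0:ℝ) < R*((n:ℝ)+2)^2*((n:ℝ)+3)*((n:ℝ)+1) := by positivity
  have hbig : (0:ℝ) < 240 + 240*(n:ℝ)*(1-z) + 8*(n:ℝ)*(1-z)^2 + 16*(n:ℝ)*(1-z)^2*(1-(1-z))
      + (n:ℝ)^2*(1-z)^2*(96-(1-z)^2) + 16*(n:ℝ)^3*(1-z)^3 + (n:ℝ)^4*(1-z)^4 := by positivity
  positivity

/-- `G4` has at most one zero in `(0,1)`. -/
theorem G4uniq (n : ℕ) {μ R : ℝ} (hμ0 : 0 < μ) (hμ1 : μ < 1) (hR : 1 ≤ R)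
    {x y : ℝ} (hx0 : 0 < x) (hxy : x < y) (hy1 : y < 1)
    (hgx : G4 n μ R x = 0) (hgy : G4 n μ R y = 0) : False := by
  have hx1 : x < 1 := hxy.trans hy1
  have hy0 : 0 < y := hx0.trans hxy
  have hμpow : (0:ℝ) < μ^(n+3) := pow_pos hμ0 _
  have hQx : (R*μ-1) * AA n x + R * x * BB n x = 0 := by
    have := hQ n μ R x
    rw [hgx] at this
    have h2 := (mul_eq_zero.mp this.symm).resolve_left hμpow.ne'
    linarith
  have hQy : (R*μ-1) * AA n y + R * y * BB n y = 0 := by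
    have := hQ n μ R y
    rw [hgy] at this
    have h2 := (mul_eq_zero.mp this.symm).resolve_left hμpow.ne'
    linarith
  have hRpos : (0:ℝ) < R := lt_of_lt_of_le one_pos hR
  rcases le_or_gt (R*μ) 1 with hu | hu
  · -- R*μ ≤ 1 : G4 is strictly negative at x, contradiction
    have hA := AApos n hx0 hx1
    have hB := BBneg n hx0 hx1
    have h1 : (R*μ-1) * AA n x ≤ 0 := mul_nonpos_of_nonpos_of_nonneg (by linarith) hA.le
    have h2 : R * x * BB n x < 0 := mul_neg_of_pos_of_neg (by positivity) hB
    linarith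
  · -- R*μ > 1 : mean value theorem on m(z) = R*z*(-BB z)/AA z
    set mf : ℝ → ℝ := fun z => R*z*(-BB n z) / AA n z with hmf
    have hder : ∀ z : ℝ, 0 < z → z < 1 →
        HasDerivAt mf (((R*(-BB n z) + R*z*(-BBD n z)) * AA n z
          - (R*z*(-BB n z)) * AAD n z) / (AA n z)^2) z := by
      intro z hz0 hz1
      have hnum : HasDerivAt (fun w : ℝ => R*w*(-BB n w)) (R*(-BB n z) + R*z*(-BBD n z)) z := by
        have h1 : HasDerivAt (fun w : ℝ => R*w) R z := by
          simpa using (hasDerivAt_id z).const_mul R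
        have h2 : HasDerivAt (fun w : ℝ => -BB n w) (-BBD n z) z := by
          have hb : HasDerivAt (fun w => BB n w) (BBD n z) z := by
            simp only [BB]
            have h3 := ((hasDerivAt_const z (((n:ℝ)+1)*((n:ℝ)+2)*((n:ℝ)+3)*((n:ℝ)+4))).neg.add
              ((hasDerivAt_id z).const_mul (2*((n:ℝ)*((n:ℝ)+1)*((n:ℝ)+2)*((n:ℝ)+3))))).sub
              ((hdt (((n:ℝ)-1)*(n:ℝ)*((n:ℝ)+1)*((n:ℝ)+2)) 2 z))
            refine h3.congr_deriv ?_
            simp only [BBD]; push_cast; ring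
          exact hb.neg
        have := h1.mul h2
        exact this
      have hA : HasDerivAt (fun w => AA n w) (AAD n z) z := by
        simp only [AA]
        have h3 := ((hasDerivAt_const z (((n:ℝ)+2)*((n:ℝ)+3)*((n:ℝ)+4)*((n:ℝ)+5))).sub
          ((hasDerivAt_id z).const_mul (2*(((n:ℝ)+1)*((n:ℝ)+2)*((n:ℝ)+3)*((n:ℝ)+4))))).add
          ((hdt ((n:ℝ)*((n:ℝ)+1)*((n:ℝ)+2)*((n:ℝ)+3)) 2 z))
        refine h3.congr_deriv ?_
        simp only [AAD]; push_cast; ring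
      exact hnum.div hA (AApos n hz0 hz1).ne'
    have hcont : ContinuousOn mf (Set.Icc x y) := by
      intro z hz
      have hz0 : 0 < z := lt_of_lt_of_le hx0 hz.1
      have hz1 : z < 1 := lt_of_le_of_lt hz.2 hy1
      exact (hder z hz0 hz1).continuousAt.continuousWithinAt
    obtain ⟨c, hc, hceq⟩ := exists_hasDerivAt_eq_slope mf
      (fun z => ((R*(-BB n z) + R*z*(-BBD n z)) * AA n z - (R*z*(-BB n z)) * AAD n z) / (AA n z)^2)
      hxy hcont
      (fun z hz => hder z (hx0.trans hz.1) (hz.2.trans hy1))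
    have hc0 : 0 < c := hx0.trans hc.1
    have hc1 : c < 1 := hc.2.trans hy1
    -- mf x = R*μ - 1 = mf y
    have hmx : mf x = R*μ-1 := by
      rw [hmf]
      rw [div_eq_iff (AApos n hx0 hx1).ne']
      linarith
    have hmy : mf y = R*μ-1 := by
      rw [hmf]
      rw [div_eq_iff (AApos n hy0 hy1).ne']
      linarith
    rw [hmx, hmy] at hceq
    have hslope : ((R*(-BB n c) + R*c*(-BBD n c)) * AA n c - (R*c*(-BB n c)) * AAD n c) / (AA n c)^2 = 0 := by
      rw [hceq]; simp
    have hnum0 := (div_eq_zero_iff.mp hslope).resolve_right (pow_ne_zero _ (AApos n hc0 hc1).ne')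
    exact absurd hnum0 (NUMpos n hR hc0 hc1).ne'

/-! ### Counting helpers -/

section Count

variable {g1 g2 g3 g4 : ℝ → ℝ}

/-- From 4 ordered zeros of `g2` in `(0,1)`, derive a contradiction. -/
theorem run4
    (RP3 : ∀ x y : ℝ, 0 < x → x < y → g2 x = 0 → g2 y = 0 → ∃ c, x < c ∧ c < y ∧ g3 c = 0)
    (RP4 : ∀ x y : ℝ, 0 < x → x < y → g3 x = 0 → g3 y = 0 → ∃ c, x < c ∧ c < y ∧ g4 c = 0)
    (U : ∀ x y : ℝ, 0 < x → x < y → y < 1 → g4 x = 0 → g4 y = 0 → False)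
    {w1 w2 w3 w4 : ℝ} (h0 : 0 < w1) (h12 : w1 < w2) (h23 : w2 < w3)
    (h34 : w3 < w4) (h41 : w4 < 1)
    (z1 : g2 w1 = 0) (z2 : g2 w2 = 0) (z3 : g2 w3 = 0) (z4 : g2 w4 = 0) : False := by
  obtain ⟨u1, hu1a, hu1b, hu1⟩ := RP3 w1 w2 h0 h12 z1 z2
  obtain ⟨u2, hu2a, hu2b, hu2⟩ := RP3 w2 w3 (by linarith) h23 z2 z3
  obtain ⟨u3, hu3a, hu3b, hu3⟩ := RP3 w3 w4 (by linarith) h34 z3 z4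
  obtain ⟨v1, hv1a, hv1b, hv1⟩ := RP4 u1 u2 (by linarith) (by linarith) hu1 hu2
  obtain ⟨v2, hv2a, hv2b, hv2⟩ := RP4 u2 u3 (by linarith) (by linarith) hu2 hu3
  exact U v1 v2 (by linarith) (by linarith) (by linarith) hv1 hv2

/-- From 5 ordered zeros of `g1` in `(0,1)`, derive a contradiction. -/
theorem run5
    (RP2 : ∀ x y : ℝ, 0 < x → x < y → g1 x = 0 → g1 y = 0 → ∃ c, x < c ∧ c < y ∧ g2 c = 0)
    (RP3 : ∀ x y : ℝ, 0 < x → x < y → g2 x = 0 → g2 y = 0 → ∃ c, x < c ∧ c < y ∧ g3 c = 0)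
    (RP4 : ∀ x y : ℝ, 0 < x → x < y → g3 x = 0 → g3 y = 0 → ∃ c, x < c ∧ c < y ∧ g4 c = 0)
    (U : ∀ x y : ℝ, 0 < x → x < y → y < 1 → g4 x = 0 → g4 y = 0 → False)
    {w1 w2 w3 w4 w5 : ℝ} (h0 : 0 < w1) (h12 : w1 < w2) (h23 : w2 < w3)
    (h34 : w3 < w4) (h45 : w4 < w5) (h51 : w5 < 1)
    (z1 : g1 w1 = 0) (z2 : g1 w2 = 0) (z3 : g1 w3 = 0) (z4 : g1 w4 = 0) (z5 : g1 w5 = 0) :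
    False := by
  obtain ⟨u1, hu1a, hu1b, hu1⟩ := RP2 w1 w2 h0 h12 z1 z2
  obtain ⟨u2, hu2a, hu2b, hu2⟩ := RP2 w2 w3 (by linarith) h23 z2 z3
  obtain ⟨u3, hu3a, hu3b, hu3⟩ := RP2 w3 w4 (by linarith) h34 z3 z4
  obtain ⟨u4, hu4a, hu4b, hu4⟩ := RP2 w4 w5 (by linarith) h45 z4 z5
  exact run4 RP3 RP4 U (by linarith) (by linarith : u1 < u2) (by linarith : u2 < u3)
    (by linarith : u3 < u4) (by linarith) hu1 hu2 hu3 hu4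

/-- From 4 ordered zeros of `g1` in `(0,1)` one of which is `m0` with `g2 m0 = 0`,
derive a contradiction. -/
theorem run4m
    (RP2 : ∀ x y : ℝ, 0 < x → x < y → g1 x = 0 → g1 y = 0 → ∃ c, x < c ∧ c < y ∧ g2 c = 0)
    (RP3 : ∀ x y : ℝ, 0 < x → x < y → g2 x = 0 → g2 y = 0 → ∃ c, x < c ∧ c < y ∧ g3 c = 0)
    (RP4 : ∀ x y : ℝ, 0 < x → x < y → g3 x = 0 → g3 y = 0 → ∃ c, x < c ∧ c < y ∧ g4 c = 0)
    (U : ∀ x y : ℝ, 0 < x → x < y → y < 1 → g4 x = 0 → g4 y = 0 → False)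
    {m0 w1 w2 w3 w4 : ℝ} (h0 : 0 < w1) (h12 : w1 < w2) (h23 : w2 < w3)
    (h34 : w3 < w4) (h41 : w4 < 1)
    (z1 : g1 w1 = 0) (z2 : g1 w2 = 0) (z3 : g1 w3 = 0) (z4 : g1 w4 = 0)
    (hmem : m0 = w1 ∨ m0 = w2 ∨ m0 = w3 ∨ m0 = w4) (hm : g2 m0 = 0) : False := by
  obtain ⟨u1, hu1a, hu1b, hu1⟩ := RP2 w1 w2 h0 h12 z1 z2
  obtain ⟨u2, hu2a, hu2b, hu2⟩ := RP2 w2 w3 (by linarith) h23 z2 z3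
  obtain ⟨u3, hu3a, hu3b, hu3⟩ := RP2 w3 w4 (by linarith) h34 z3 z4
  rcases hmem with rfl | rfl | rfl | rfl
  · exact run4 RP3 RP4 U h0 (by linarith : m0 < u1) (by linarith : u1 < u2)
      (by linarith : u2 < u3) (by linarith) hm hu1 hu2 hu3
  · exact run4 RP3 RP4 U (by linarith) (by linarith : u1 < m0) (by linarith : m0 < u2)
      (by linarith : u2 < u3) (by linarith) hu1 hm hu2 hu3
  · exact run4 RP3 RP4 U (by linarith) (by linarith : u1 < u2) (by linarith : u2 < m0)
      (by linarith : m0 < u3) (by linarith) hu1 hu2 hm hu3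
  · exact run4 RP3 RP4 U (by linarith) (by linarith : u1 < u2) (by linarith : u2 < u3)
      (by linarith : u3 < m0) (by linarith) hu1 hu2 hu3 hm

end Count

end Stmt6

open Stmt6 in
theorem stmt_6 (T : ℕ) (hT : 2 ≤ T) (μ : ℝ) (hμ : μ ∈ Set.Ioo (0 : ℝ) 1)
    (R : ℝ) (hR : 1 ≤ R) :
    {lam ∈ Set.Ioo (0 : ℝ) 1 | H T μ R lam = 0}.encard ≤ 3 := by
  obtain ⟨hμ0, hμ1⟩ := hμ
  by_contra hcon
  push_neg at hcon
  have h4 : (4:ℕ∞) ≤ {lam ∈ Set.Ioo (0 : ℝ) 1 | H T μ R lam = 0}.encard := by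
    have h := Order.add_one_le_of_lt hcon
    have h34 : (3:ℕ∞) + 1 = 4 := by norm_num
    rwa [h34] at h
  obtain ⟨t, hts, ht4⟩ := Set.exists_subset_encard_eq h4
  have htf : t.Finite := Set.finite_of_encard_eq_coe (by exact_mod_cast ht4)
  have hcard : htf.toFinset.card = 4 := by
    have h := htf.encard_eq_coe_toFinset_card
    rw [ht4] at h
    exact_mod_cast h.symm
  obtain ⟨a, b, c, d, hl⟩ : ∃ a b c d : ℝ, htf.toFinset.sort (·≤·) = [a, b, c, d] := by
    have hlen : (htf.toFinset.sort (·≤·)).length = 4 := by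
      rw [Finset.length_sort, hcard]
    rcases e : htf.toFinset.sort (·≤·) with _ | ⟨a, l1⟩
    · rw [e] at hlen; simp at hlen
    · have h3 : l1.length = 3 := by rw [e] at hlen; simpa using hlen
      obtain ⟨b, c, d, rfl⟩ := List.length_eq_three.mp h3
      exact ⟨a, b, c, d, rfl⟩
  have hsorted := (Finset.sortedLT_sort htf.toFinset).pairwise
  rw [hl] at hsorted
  simp only [List.pairwise_cons, List.mem_cons, List.mem_singleton, List.not_mem_nil] at hsorted
  have hab : a < b := by aesop
  have hbc : b < c := by aesop
  have hcd : c < d := by aesop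
  have hmemS : ∀ x : ℝ, x ∈ htf.toFinset → (0 < x ∧ x < 1) ∧ H T μ R x = 0 := by
    intro x hx
    have hxt : x ∈ t := htf.mem_toFinset.mp hx
    have := hts hxt
    obtain ⟨hIoo, hroot⟩ := this
    exact ⟨⟨hIoo.1, hIoo.2⟩, hroot⟩
  have hamem : a ∈ htf.toFinset := by
    rw [← Finset.mem_sort (·≤·), hl]; simp
  have hbmem : b ∈ htf.toFinset := by
    rw [← Finset.mem_sort (·≤·), hl]; simp
  have hcmem : c ∈ htf.toFinset := by
    rw [← Finset.mem_sort (·≤·), hl]; simp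
  have hdmem : d ∈ htf.toFinset := by
    rw [← Finset.mem_sort (·≤·), hl]; simp
  obtain ⟨⟨ha0, ha1⟩, haH⟩ := hmemS a hamem
  obtain ⟨⟨hb0, hb1⟩, hbH⟩ := hmemS b hbmem
  obtain ⟨⟨hc0, hc1⟩, hcH⟩ := hmemS c hcmem
  obtain ⟨⟨hd0, hd1⟩, hdH⟩ := hmemS d hdmem
  clear hmemS hamem hbmem hcmem hdmem hsorted hl hcard ht4 hts hcon h4
  obtain ⟨n, rfl⟩ : ∃ n, T = n + 2 := ⟨T - 2, by omega⟩
  -- zeros of PP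
  have hPa : PP n μ R a = 0 := by rw [← HP n μ R a, haH]; ring
  have hPb : PP n μ R b = 0 := by rw [← HP n μ R b, hbH]; ring
  have hPc : PP n μ R c = 0 := by rw [← HP n μ R c, hcH]; ring
  have hPd : PP n μ R d = 0 := by rw [← HP n μ R d, hdH]; ring
  have hPμ : PP n μ R μ = 0 := by rw [← HP n μ R μ]; ring
  have hG1μ : G1 n μ R μ = 0 := by rw [hg1, hPμ, PP1mu]; ring
  -- Rolle properties
  have RP1 : ∀ x y : ℝ, 0 < x → x < y → PP n μ R x = 0 → PP n μ R y = 0 →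
      ∃ c0, x < c0 ∧ c0 < y ∧ G1 n μ R c0 = 0 := by
    intro x y hx hxy hfx hfy
    exact rolle_step (PP n μ R) (PP1 n μ R) (G1 n μ R) (n+5) (by omega) (hdPP n μ R)
      (fun z => by rw [hg1 n μ R z]; push_cast; ring) hx hxy hfx hfy
  have RP2 : ∀ x y : ℝ, 0 < x → x < y → G1 n μ R x = 0 → G1 n μ R y = 0 →
      ∃ c0, x < c0 ∧ c0 < y ∧ G2 n μ R c0 = 0 := by
    intro x y hx hxy hfx hfy
    exact rolle_step (G1 n μ R) (G1D n μ R) (G2 n μ R) (n+4) (by omega) (hdG1 n μ R)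
      (fun z => by rw [hg2 n μ R z]; push_cast; ring) hx hxy hfx hfy
  have RP3 : ∀ x y : ℝ, 0 < x → x < y → G2 n μ R x = 0 → G2 n μ R y = 0 →
      ∃ c0, x < c0 ∧ c0 < y ∧ G3 n μ R c0 = 0 := by
    intro x y hx hxy hfx hfy
    exact rolle_step (G2 n μ R) (G2D n μ R) (G3 n μ R) (n+3) (by omega) (hdG2 n μ R)
      (fun z => by rw [hg3 n μ R z]; push_cast; ring) hx hxy hfx hfy
  have RP4 : ∀ x y : ℝ, 0 < x → x < y → G3 n μ R x = 0 → G3 n μ R y = 0 →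
      ∃ c0, x < c0 ∧ c0 < y ∧ G4 n μ R c0 = 0 := by
    intro x y hx hxy hfx hfy
    exact rolle_step (G3 n μ R) (G3D n μ R) (G4 n μ R) (n+2) (by omega) (hdG3 n μ R)
      (fun z => by rw [hg4 n μ R z]; push_cast; ring) hx hxy hfx hfy
  have U : ∀ x y : ℝ, 0 < x → x < y → y < 1 → G4 n μ R x = 0 → G4 n μ R y = 0 → False :=
    fun x y hx hxy hy hgx hgy => G4uniq n hμ0 hμ1 hR hx hxy hy hgx hgy
  by_cases hmem : μ = a ∨ μ = b ∨ μ = c ∨ μ = d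
  · -- the "μ is one of the four roots" case
    have hHμ : H (n+2) μ R μ = 0 := by rcases hmem with rfl | rfl | rfl | rfl <;> assumption
    have hPP2μ : PP2 n μ R μ = 0 := by rw [PP2mu n μ R, hHμ]; ring
    have hG1Dμ : G1D n μ R μ = 0 := by rw [hg1D, PP1mu, hPP2μ]; ring
    have hG2μ : G2 n μ R μ = 0 := by rw [hg2, hG1μ, hG1Dμ]; ring
    obtain ⟨c1, hzc1a, hzc1b, hzc1⟩ := RP1 a b ha0 hab hPa hPb
    obtain ⟨c2, hzc2a, hzc2b, hzc2⟩ := RP1 b c (by linarith) hbc hPb hPc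
    obtain ⟨c3, hzc3a, hzc3b, hzc3⟩ := RP1 c d (by linarith) hcd hPc hPd
    rcases hmem with rfl | rfl | rfl | rfl
    · exact run4m RP2 RP3 RP4 U ha0 (by linarith : μ < c1) (by linarith : c1 < c2)
        (by linarith : c2 < c3) (by linarith) hG1μ hzc1 hzc2 hzc3 (Or.inl rfl) hG2μ
    · exact run4m RP2 RP3 RP4 U (by linarith) (by linarith : c1 < μ) (by linarith : μ < c2)
        (by linarith : c2 < c3) (by linarith) hzc1 hG1μ hzc2 hzc3 (Or.inr (Or.inl rfl)) hG2μ
    · exact run4m RP2 RP3 RP4 U (by linarith) (by linarith : c1 < c2) (by linarith : c2 < μ)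
        (by linarith : μ < c3) (by linarith) hzc1 hzc2 hG1μ hzc3 (Or.inr (Or.inr (Or.inl rfl))) hG2μ
    · exact run4m RP2 RP3 RP4 U (by linarith) (by linarith : c1 < c2) (by linarith : c2 < c3)
        (by linarith : c3 < μ) (by linarith) hzc1 hzc2 hzc3 hG1μ (Or.inr (Or.inr (Or.inr rfl))) hG2μ
  · -- μ is none of the four roots : five distinct zeros of PP
    push_neg at hmem
    obtain ⟨hna, hnb, hnc, hnd⟩ := hmem
    -- helper to finish from five sorted zeros of PP with μ among them
    have finish5 : ∀ z1 z2 z3 z4 z5 : ℝ, 0 < z1 → z1 < z2 → z2 < z3 → z3 < z4 → z4 < z5 →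
        z5 < 1 → PP n μ R z1 = 0 → PP n μ R z2 = 0 → PP n μ R z3 = 0 → PP n μ R z4 = 0 →
        PP n μ R z5 = 0 →
        (μ = z1 ∨ μ = z2 ∨ μ = z3 ∨ μ = z4 ∨ μ = z5) → False := by
      intro z1 z2 z3 z4 z5 h0 h12 h23 h34 h45 h51 hz1 hz2 hz3 hz4 hz5 hm
      obtain ⟨c1, hzc1a, hzc1b, hzc1⟩ := RP1 z1 z2 h0 h12 hz1 hz2
      obtain ⟨c2, hzc2a, hzc2b, hzc2⟩ := RP1 z2 z3 (by linarith) h23 hz2 hz3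
      obtain ⟨c3, hzc3a, hzc3b, hzc3⟩ := RP1 z3 z4 (by linarith) h34 hz3 hz4
      obtain ⟨c4, hzc4a, hzc4b, hzc4⟩ := RP1 z4 z5 (by linarith) h45 hz4 hz5
      rcases hm with rfl | rfl | rfl | rfl | rfl
      · exact run5 RP2 RP3 RP4 U h0 (by linarith : μ < c1) (by linarith : c1 < c2)
          (by linarith : c2 < c3) (by linarith : c3 < c4) (by linarith)
          hG1μ hzc1 hzc2 hzc3 hzc4
      · exact run5 RP2 RP3 RP4 U (by linarith) (by linarith : c1 < μ) (by linarith : μ < c2)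
          (by linarith : c2 < c3) (by linarith : c3 < c4) (by linarith)
          hzc1 hG1μ hzc2 hzc3 hzc4
      · exact run5 RP2 RP3 RP4 U (by linarith) (by linarith : c1 < c2) (by linarith : c2 < μ)
          (by linarith : μ < c3) (by linarith : c3 < c4) (by linarith)
          hzc1 hzc2 hG1μ hzc3 hzc4
      · exact run5 RP2 RP3 RP4 U (by linarith) (by linarith : c1 < c2) (by linarith : c2 < c3)
          (by linarith : c3 < μ) (by linarith : μ < c4) (by linarith)
          hzc1 hzc2 hzc3 hG1μ hzc4
      · exact run5 RP2 RP3 RP4 U (by linarith) (by linarith : c1 < c2) (by linarith : c2 < c3)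
          (by linarith : c3 < c4) (by linarith : c4 < μ) (by linarith)
          hzc1 hzc2 hzc3 hzc4 hG1μ
    rcases lt_trichotomy μ a with h1 | h1 | h1
    · exact finish5 μ a b c d hμ0 h1 hab hbc hcd hd1 hPμ hPa hPb hPc hPd (Or.inl rfl)
    · exact absurd h1 hna
    rcases lt_trichotomy μ b with h2 | h2 | h2
    · exact finish5 a μ b c d ha0 h1 h2 hbc hcd hd1 hPa hPμ hPb hPc hPd
        (Or.inr (Or.inl rfl))
    · exact absurd h2 hnb
    rcases lt_trichotomy μ c with h3 | h3 | h3
    · exact finish5 a b μ c d ha0 hab h2 h3 hcd hd1 hPa hPb hPμ hPc hPd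
        (Or.inr (Or.inr (Or.inl rfl)))
    · exact absurd h3 hnc
    rcases lt_trichotomy μ d with h5 | h5 | h5
    · exact finish5 a b c μ d ha0 hab hbc h3 h5 hd1 hPa hPb hPc hPμ hPd
        (Or.inr (Or.inr (Or.inr (Or.inl rfl))))
    · exact absurd h5 hnd
    · exact finish5 a b c d μ ha0 hab hbc hcd h5 hμ1 hPa hPb hPc hPd hPμ
        (Or.inr (Or.inr (Or.inr (Or.inr rfl))))
end

section
/- (Corollary 1) For every threshold T ≥ 2, low service rate μ ∈ (0,1), and reward R with 1 ≤ R < 1/μ, the polynomial equation H(λ) = 0 has at most two roots in the open interval (0,1); that is, the set {λ ∈ (0,1) : H(λ) = 0} has at most two elements. -/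
lemma Corollary1.concaveOn_affine {s : Set ℝ} (hs : Convex ℝ s) (a b : ℝ) :
    ConcaveOn ℝ s (fun x => a * x + b) := by
  refine ⟨hs, fun x _ y _ p q hp hq hpq => ?_⟩
  simp only [smul_eq_mul]
  exact le_of_eq (by linear_combination b * hpq)

lemma Corollary1.concaveOn_neg_smul {s : Set ℝ} {f : ℝ → ℝ} {c : ℝ} (hc : c ≤ 0)
    (hf : ConvexOn ℝ s f) : ConcaveOn ℝ s (fun x => c * f x) := by
  refine ⟨hf.1, fun x hx y hy p q hp hq hpq => ?_⟩
  have h2 := hf.2 hx hy hp hq hpq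
  simp only [smul_eq_mul] at h2 ⊢
  nlinarith [h2]

lemma Corollary1.strictConcaveOn_neg_smul {s : Set ℝ} {f : ℝ → ℝ} {c : ℝ} (hc : c < 0)
    (hf : StrictConvexOn ℝ s f) : StrictConcaveOn ℝ s (fun x => c * f x) := by
  refine ⟨hf.1, fun x hx y hy hxy p q hp hq hpq => ?_⟩
  have h2 := hf.2 hx hy hxy hp hq hpq
  simp only [smul_eq_mul] at h2 ⊢
  nlinarith [h2]

lemma Corollary1.concaveOn_sum {s : Set ℝ} (hs : Convex ℝ s) {ι : Type*} (t : Finset ι)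
    (f : ι → ℝ → ℝ) (h : ∀ i ∈ t, ConcaveOn ℝ s (f i)) :
    ConcaveOn ℝ s (fun x => ∑ i ∈ t, f i x) := by
  classical
  induction t using Finset.induction_on with
  | empty => simpa using concaveOn_const (0 : ℝ) hs
  | insert _ _ hni ih =>
    rename_i a t'
    simp only [Finset.sum_insert hni]
    exact (h a (Finset.mem_insert_self a t')).add
      (ih (fun i hi => h i (Finset.mem_insert_of_mem hi)))

/-- A strictly concave function has at most two zeros on its set. -/
lemma Corollary1.strictConcaveOn_zeros {s : Set ℝ} {f : ℝ → ℝ}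
    (hf : StrictConcaveOn ℝ s f) : {x ∈ s | f x = 0}.encard ≤ 2 := by
  set Z := {x ∈ s | f x = 0} with hZ
  have key : ∀ x ∈ Z, ∀ y ∈ Z, ∀ z ∈ Z, x < y → y < z → False := by
    rintro x ⟨hxs, hx0⟩ y ⟨hys, hy0⟩ z ⟨hzs, hz0⟩ hxy hyz
    have hxz : x < z := hxy.trans hyz
    set p := (z - y) / (z - x) with hp
    set q := (y - x) / (z - x) with hq
    have hzx : (0:ℝ) < z - x := by linarith
    have hp0 : 0 < p := div_pos (by linarith) hzx
    have hq0 : 0 < q := div_pos (by linarith) hzx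
    have hpq : p + q = 1 := by rw [hp, hq]; field_simp; ring
    have hcomb : p • x + q • z = y := by
      rw [hp, hq, smul_eq_mul, smul_eq_mul]; field_simp; ring
    have := hf.2 hxs hzs (ne_of_lt hxz) hp0 hq0 hpq
    rw [hcomb, hx0, hz0, hy0] at this
    simp at this
  by_contra hcon
  push_neg at hcon
  have h1 : 1 < Z.encard := lt_trans (by norm_num) hcon
  obtain ⟨a, b, ha, hb, hab⟩ := Set.one_lt_encard_iff.1 h1
  have hsub : ¬ (Z ⊆ {a, b}) := by
    intro hsub
    have := (Set.encard_mono hsub).trans (Set.encard_insert_le _ _)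
    simp [Set.encard_singleton] at this
    exact absurd (this.trans (by norm_num)) (not_le.2 hcon)
  obtain ⟨c, hc, hcab⟩ := Set.not_subset.1 hsub
  simp only [Set.mem_insert_iff, Set.mem_singleton_iff, not_or] at hcab
  obtain ⟨hca, hcb⟩ := hcab
  have haZ : a ∈ Z := ha
  have hbZ : b ∈ Z := hb
  rcases lt_trichotomy a b with h1' | h1' | h1'
  · rcases lt_trichotomy c a with h2 | h2 | h2
    · exact key c hc a haZ b hbZ h2 h1'
    · exact hca h2
    · rcases lt_trichotomy c b with h3 | h3 | h3
      · exact key a haZ c hc b hbZ h2 h3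
      · exact hcb h3
      · exact key a haZ b hbZ c hc h1' h3
  · exact hab h1'
  · rcases lt_trichotomy c b with h2 | h2 | h2
    · exact key c hc b hbZ a haZ h2 h1'
    · exact hcb h2
    · rcases lt_trichotomy c a with h3 | h3 | h3
      · exact key b hbZ c hc a haZ h2 h3
      · exact hca h3
      · exact key b hbZ a haZ c hc h1' h3

/-- The polynomial `H` divided by `x ^ T`, written with integer powers. -/
noncomputable def Corollary1.Gaux (T : ℕ) (μ R : ℝ) (x : ℝ) : ℝ :=
  (-R * (1 - μ) * x + (1 - μ) * (R * (1 - μ) + (T : ℝ) - 1))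
    + (∑ j ∈ Finset.Icc 2 (T - 1),
        ((1 - μ) * (μ ^ (T - 1 - j) * (-R * μ ^ 2 + (R + (j : ℝ) - 1) * μ - ((j : ℝ) + 1))))
          * x ^ ((j : ℤ) - (T : ℤ)))
    + (μ ^ (T - 2) * (-2 * R * μ ^ 2 + (R + 2) * μ - 2)) * x ^ ((1 : ℤ) - (T : ℤ))
    + (μ ^ (T - 1) * (R * μ - 1)) * x ^ (-(T : ℤ))

lemma Corollary1.Gaux_mul_pow (T : ℕ) (μ R : ℝ) (x : ℝ) (hx : 0 < x) :
    Corollary1.Gaux T μ R x * x ^ T = H T μ R x := by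
  have hxne : x ≠ 0 := hx.ne'
  have hs' : (∑ j ∈ Finset.Icc 2 (T - 1),
        ((1 - μ) * (μ ^ (T - 1 - j) * (-R * μ ^ 2 + (R + (j : ℝ) - 1) * μ - ((j : ℝ) + 1))))
          * x ^ ((j : ℤ) - (T : ℤ))) * x ^ T
      = (1 - μ) * ∑ j ∈ Finset.Icc 2 (T - 1),
          μ ^ (T - 1 - j) * (-R * μ ^ 2 + (R + (j : ℝ) - 1) * μ - ((j : ℝ) + 1)) * x ^ j := by
    rw [Finset.sum_mul, Finset.mul_sum]
    refine Finset.sum_congr rfl fun j hj => ?_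
    rw [mul_assoc, ← zpow_natCast x T, ← zpow_add₀ hxne, sub_add_cancel, zpow_natCast]
    ring
  have e1 : (μ ^ (T - 2) * (-2 * R * μ ^ 2 + (R + 2) * μ - 2)) * x ^ ((1 : ℤ) - (T : ℤ)) * x ^ T
      = μ ^ (T - 2) * (-2 * R * μ ^ 2 + (R + 2) * μ - 2) * x := by
    rw [mul_assoc, ← zpow_natCast x T, ← zpow_add₀ hxne, sub_add_cancel, zpow_one]
  have e0 : (μ ^ (T - 1) * (R * μ - 1)) * x ^ (-(T : ℤ)) * x ^ T
      = μ ^ (T - 1) * (R * μ - 1) := by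
    rw [mul_assoc, ← zpow_natCast x T, ← zpow_add₀ hxne, neg_add_cancel, zpow_zero, mul_one]
  simp only [Corollary1.Gaux, H]
  rw [add_mul, add_mul, add_mul, hs', e1, e0, pow_succ]
  ring

lemma Corollary1.Gaux_strictConcaveOn (T : ℕ) (hT : 2 ≤ T) (μ : ℝ)
    (hμ : μ ∈ Set.Ioo (0 : ℝ) 1) (R : ℝ) (hR : 1 ≤ R) (hRμ : R < 1 / μ) :
    StrictConcaveOn ℝ (Set.Ioo (0:ℝ) 1) (Corollary1.Gaux T μ R) := by
  obtain ⟨hμ0, hμ1⟩ := hμ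
  have hR0 : (0:ℝ) < R := lt_of_lt_of_le one_pos hR
  have hRμ' : R * μ < 1 := (lt_div_iff₀ hμ0).mp hRμ
  have hconv : Convex ℝ (Set.Ioo (0:ℝ) 1) := convex_Ioo 0 1
  have hsub : Set.Ioo (0:ℝ) 1 ⊆ Set.Ioi 0 := fun x hx => hx.1
  have hzpow : ∀ m : ℤ, m ≠ 0 → m ≠ 1 →
      StrictConvexOn ℝ (Set.Ioo (0:ℝ) 1) (fun x : ℝ => x ^ m) := fun m h0 h1 =>
    (strictConvexOn_zpow h0 h1).subset hsub hconv
  have h1 : ConcaveOn ℝ (Set.Ioo (0:ℝ) 1)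
      (fun x => -R * (1 - μ) * x + (1 - μ) * (R * (1 - μ) + (T : ℝ) - 1)) :=
    Corollary1.concaveOn_affine hconv _ _
  have hS : ConcaveOn ℝ (Set.Ioo (0:ℝ) 1)
      (fun x => ∑ j ∈ Finset.Icc 2 (T - 1),
        ((1 - μ) * (μ ^ (T - 1 - j) * (-R * μ ^ 2 + (R + (j : ℝ) - 1) * μ - ((j : ℝ) + 1))))
          * x ^ ((j : ℤ) - (T : ℤ))) := by
    refine Corollary1.concaveOn_sum hconv _ _ fun j hj => ?_
    obtain ⟨hj2, hjT⟩ := Finset.mem_Icc.mp hj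
    have hjT' : j < T := lt_of_le_of_lt hjT (Nat.sub_lt (by omega) one_pos)
    have hj2' : (2:ℝ) ≤ (j:ℝ) := by exact_mod_cast hj2
    have hcoef : (1 - μ) * (μ ^ (T - 1 - j)
        * (-R * μ ^ 2 + (R + (j : ℝ) - 1) * μ - ((j : ℝ) + 1))) ≤ 0 := by
      have hμp : (0:ℝ) < μ ^ (T - 1 - j) := by positivity
      have hbr : -R * μ ^ 2 + (R + (j : ℝ) - 1) * μ - ((j : ℝ) + 1) < 0 := by
        nlinarith [mul_pos (sub_pos.2 hRμ') (sub_pos.2 hμ1),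
          mul_pos (show (0:ℝ) < (j:ℝ) - 1 by linarith) (sub_pos.2 hμ1)]
      exact mul_nonpos_of_nonneg_of_nonpos (by linarith)
        (mul_nonpos_of_nonneg_of_nonpos hμp.le hbr.le)
    exact Corollary1.concaveOn_neg_smul hcoef
      (hzpow _ (by omega) (by omega)).convexOn
  have h3 : ConcaveOn ℝ (Set.Ioo (0:ℝ) 1)
      (fun x => (μ ^ (T - 2) * (-2 * R * μ ^ 2 + (R + 2) * μ - 2))
        * x ^ ((1 : ℤ) - (T : ℤ))) := by
    have hμp : (0:ℝ) < μ ^ (T - 2) := by positivity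
    have hbr : -2 * R * μ ^ 2 + (R + 2) * μ - 2 < 0 := by
      nlinarith [mul_pos (sub_pos.2 hRμ') (sub_pos.2 hμ1), mul_pos (mul_pos hR0 hμ0) hμ0]
    exact Corollary1.concaveOn_neg_smul (mul_nonpos_of_nonneg_of_nonpos hμp.le hbr.le)
      (hzpow _ (by omega) (by omega)).convexOn
  have h4 : StrictConcaveOn ℝ (Set.Ioo (0:ℝ) 1)
      (fun x => (μ ^ (T - 1) * (R * μ - 1)) * x ^ (-(T : ℤ))) := by
    have hμp : (0:ℝ) < μ ^ (T - 1) := by positivity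
    have hbr : R * μ - 1 < 0 := by linarith
    exact Corollary1.strictConcaveOn_neg_smul (mul_neg_of_pos_of_neg hμp hbr)
      (hzpow _ (by omega) (by omega))
  exact ((h1.add hS).add h3).add_strictConcaveOn h4

theorem stmt_7 (T : ℕ) (hT : 2 ≤ T) (μ : ℝ) (hμ : μ ∈ Set.Ioo (0 : ℝ) 1)
    (R : ℝ) (hR : 1 ≤ R) (hRμ : R < 1 / μ) :
    {lam ∈ Set.Ioo (0 : ℝ) 1 | H T μ R lam = 0}.encard ≤ 2 := by
  have hset : {lam ∈ Set.Ioo (0 : ℝ) 1 | H T μ R lam = 0}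
      = {x ∈ Set.Ioo (0 : ℝ) 1 | Corollary1.Gaux T μ R x = 0} := by
    ext x
    simp only [Set.mem_setOf_eq, Set.mem_Ioo, and_congr_right_iff]
    intro hx
    have hx0 : 0 < x := hx.1
    have hxT : x ^ T ≠ 0 := pow_ne_zero _ hx0.ne'
    rw [← Corollary1.Gaux_mul_pow T μ R x hx0]
    constructor
    · intro h
      rcases mul_eq_zero.mp h with h' | h'
      · exact h'
      · exact absurd h' hxT
    · intro h
      rw [h, zero_mul]
  rw [hset]
  exact Corollary1.strictConcaveOn_zeros
    (Corollary1.Gaux_strictConcaveOn T hT μ hμ R hR hRμ)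
end

section
/- (Theorem 1.i) For every threshold T ≥ 1, low service rate μ ∈ (0,1), and reward R with 0 ≤ R < 1, the delay function satisfies W(λ) > R for every λ ∈ [0,1); in particular, the equation W(λ) = R has no solution in (0,1), so λ = 0 is the unique equilibrium arrival rate. -/
noncomputable def Eaux (n : ℕ) (μ : ℝ) (x : ℝ) : ℝ :=
  ∑ i ∈ Finset.range n, ((i : ℝ) + 1) * x ^ i * μ ^ (n - 1 - i)

lemma g_eq (n : ℕ) (μ x : ℝ) :
    g (n + 1) μ x = -(n : ℝ) * (1 - μ) * x ^ (n + 1)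
      + (1 - μ) * ∑ i ∈ Finset.range n,
          μ ^ (n - 1 - i) * (((i : ℝ) + 2) - (i : ℝ) * μ) * x ^ (i + 1)
      + μ ^ n := by
  have hsum : ∑ j ∈ Finset.Icc 1 (n + 1 - 1),
        μ ^ (j - 1) * ((((n + 1 : ℕ) : ℝ) - ((j : ℝ) + 1)) * μ + (j : ℝ) - 1
          - ((n + 1 : ℕ) : ℝ)) * x ^ (n + 1 - j)
      = - ∑ i ∈ Finset.range n,
          μ ^ (n - 1 - i) * (((i : ℝ) + 2) - (i : ℝ) * μ) * x ^ (i + 1) := by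
    rw [show n + 1 - 1 = n from rfl, ← Finset.Ico_add_one_right_eq_Icc, Finset.sum_Ico_eq_sum_range]
    rw [show n + 1 - 1 = n from rfl]
    rw [← Finset.sum_range_reflect, ← Finset.sum_neg_distrib]
    apply Finset.sum_congr rfl
    intro i hi
    have hin : i < n := Finset.mem_range.mp hi
    have e1 : 1 + (n - 1 - i) = n - i := by omega
    have e2 : n - i - 1 = n - 1 - i := by omega
    have e3 : n + 1 - (n - i) = i + 1 := by omega
    have e4 : ((n - i : ℕ) : ℝ) = (n : ℝ) - (i : ℝ) := by
      rw [Nat.cast_sub (by omega)]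
    rw [e1, e2, e3, e4]
    push_cast
    ring
  unfold g
  rw [hsum, show n + 1 - 1 = n from rfl]
  push_cast
  ring

lemma d_eq (n : ℕ) (μ x : ℝ) :
    d (n + 1) μ x = (1 - μ) * ∑ i ∈ Finset.range (n + 1), μ ^ (n - i) * x ^ (i + 1)
      + μ ^ (n + 1) := by
  have hsum : ∑ j ∈ Finset.Icc 0 (n + 1 - 1), μ ^ j * x ^ (n + 1 - j)
      = ∑ i ∈ Finset.range (n + 1), μ ^ (n - i) * x ^ (i + 1) := by
    rw [show n + 1 - 1 = n from rfl, ← Finset.Ico_add_one_right_eq_Icc, Finset.sum_Ico_eq_sum_range]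
    rw [show n + 1 - 0 = n + 1 from rfl, ← Finset.sum_range_reflect]
    apply Finset.sum_congr rfl
    intro i hi
    have hin : i < n + 1 := Finset.mem_range.mp hi
    have e1 : 0 + (n + 1 - 1 - i) = n - i := by omega
    have e2 : n + 1 - (n - i) = i + 1 := by omega
    rw [e1, e2]
  unfold d
  rw [hsum]

lemma g_succ (n : ℕ) (μ x : ℝ) :
    g (n + 2) μ x = μ * g (n + 1) μ x
      + (1 - μ) * (((n : ℝ) + 2) * x ^ (n + 1) - ((n : ℝ) + 1) * x ^ (n + 2)) := by
  rw [g_eq, g_eq]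
  rw [Finset.sum_range_succ]
  have hsum : ∑ i ∈ Finset.range n,
        μ ^ (n + 1 - 1 - i) * (((i : ℝ) + 2) - (i : ℝ) * μ) * x ^ (i + 1)
      = μ * ∑ i ∈ Finset.range n,
        μ ^ (n - 1 - i) * (((i : ℝ) + 2) - (i : ℝ) * μ) * x ^ (i + 1) := by
    rw [Finset.mul_sum]
    apply Finset.sum_congr rfl
    intro i hi
    have hin : i < n := Finset.mem_range.mp hi
    have e1 : n + 1 - 1 - i = (n - 1 - i) + 1 := by omega
    rw [e1, pow_succ]
    ring
  rw [hsum]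
  have e2 : n + 1 - 1 - n = 0 := by omega
  rw [e2]
  push_cast
  ring

lemma d_succ (n : ℕ) (μ x : ℝ) :
    d (n + 2) μ x = μ * d (n + 1) μ x + (1 - μ) * x ^ (n + 2) := by
  rw [d_eq, d_eq]
  rw [Finset.sum_range_succ]
  have hsum : ∑ i ∈ Finset.range (n + 1), μ ^ (n + 1 - i) * x ^ (i + 1)
      = μ * ∑ i ∈ Finset.range (n + 1), μ ^ (n - i) * x ^ (i + 1) := by
    rw [Finset.mul_sum]
    apply Finset.sum_congr rfl
    intro i hi
    have hin : i < n + 1 := Finset.mem_range.mp hi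
    have e1 : n + 1 - i = (n - i) + 1 := by omega
    rw [e1, pow_succ]
    ring
  have e2 : n + 1 - (n + 1) = 0 := by omega
  rw [e2] at *
  rw [hsum]
  ring

lemma Eaux_succ (n : ℕ) (μ x : ℝ) :
    Eaux (n + 1) μ x = μ * Eaux n μ x + ((n : ℝ) + 1) * x ^ n := by
  unfold Eaux
  rw [Finset.sum_range_succ]
  have hsum : ∑ i ∈ Finset.range n, ((i : ℝ) + 1) * x ^ i * μ ^ (n + 1 - 1 - i)
      = μ * ∑ i ∈ Finset.range n, ((i : ℝ) + 1) * x ^ i * μ ^ (n - 1 - i) := by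
    rw [Finset.mul_sum]
    apply Finset.sum_congr rfl
    intro i hi
    have hin : i < n := Finset.mem_range.mp hi
    have e1 : n + 1 - 1 - i = (n - 1 - i) + 1 := by omega
    rw [e1, pow_succ]
    ring
  rw [hsum]
  have e2 : n + 1 - 1 - n = 0 := by omega
  rw [e2]
  ring

lemma main_identity (n : ℕ) (μ x : ℝ) :
    g (n + 1) μ x = d (n + 1) μ x + (1 - μ) * (1 - x) * Eaux (n + 1) μ x := by
  induction n with
  | zero =>
      have hg : g 1 μ x = 1 := by
        rw [g_eq]; simp
      have hd : d 1 μ x = (1 - μ) * x + μ := by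
        rw [d_eq]; simp
      have hE : Eaux 1 μ x = 1 := by
        unfold Eaux; simp
      rw [hg, hd, hE]; ring
  | succ n ih =>
      rw [g_succ, d_succ, Eaux_succ, ih]
      push_cast
      ring

theorem stmt_8 (T : ℕ) (hT : 1 ≤ T) (μ : ℝ) (hμ : μ ∈ Set.Ioo (0 : ℝ) 1)
    (R : ℝ) (hR0 : 0 ≤ R) (hR1 : R < 1) :
    (∀ lam ∈ Set.Ico (0 : ℝ) 1, W T μ lam > R) ∧
      ∀ lam ∈ Set.Ioo (0 : ℝ) 1, W T μ lam ≠ R := by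
  obtain ⟨n, rfl⟩ : ∃ n, T = n + 1 := ⟨T - 1, by omega⟩
  obtain ⟨hμ0, hμ1⟩ := hμ
  have key : ∀ lam ∈ Set.Ico (0 : ℝ) 1, W (n + 1) μ lam > R := by
    intro lam hlam
    obtain ⟨hl0, hl1⟩ := hlam
    have hE : 0 ≤ Eaux (n + 1) μ lam := by
      apply Finset.sum_nonneg
      intro i _
      have h1 : (0 : ℝ) ≤ (i : ℝ) + 1 := by positivity
      have h2 : (0 : ℝ) ≤ lam ^ i := pow_nonneg hl0 i
      have h3 : (0 : ℝ) ≤ μ ^ (n + 1 - 1 - i) := pow_nonneg hμ0.le _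
      positivity
    have hd : 0 < d (n + 1) μ lam := by
      rw [d_eq]
      have hS : 0 ≤ ∑ i ∈ Finset.range (n + 1), μ ^ (n - i) * lam ^ (i + 1) := by
        apply Finset.sum_nonneg
        intro i _
        have h2 : (0 : ℝ) ≤ lam ^ (i + 1) := pow_nonneg hl0 _
        have h3 : (0 : ℝ) ≤ μ ^ (n - i) := pow_nonneg hμ0.le _
        positivity
      have hp : (0 : ℝ) < μ ^ (n + 1) := pow_pos hμ0 _
      nlinarith
    have hpos : 0 < (1 - lam) * d (n + 1) μ lam := by
      apply mul_pos (by linarith) hd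
    have hg : (1 - lam) * d (n + 1) μ lam ≤ g (n + 1) μ lam := by
      rw [main_identity]
      have h1 : 0 ≤ (1 - μ) * (1 - lam) * Eaux (n + 1) μ lam := by
        apply mul_nonneg (mul_nonneg (by linarith) (by linarith)) hE
      nlinarith [mul_nonneg hl0 hd.le]
    have hW : 1 ≤ W (n + 1) μ lam := by
      rw [W, le_div_iff₀ hpos]
      linarith
    linarith
  refine ⟨key, fun lam hlam => ?_⟩
  have := key lam ⟨hlam.1.le, hlam.2⟩
  exact ne_of_gt this
end

section
/- (Lemma 2.iii) For every low service rate μ with 0 < μ < 1/2, the T = 1 delay function W₁(λ) = 1/((1−λ)·(μ + λ(1−μ))) is strictly decreasing on the interval [0, (1−2μ)/(2(1−μ))] and strictly increasing on the interval [(1−2μ)/(2(1−μ)), 1). -/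
noncomputable def W₁ (μ : ℝ) (x : ℝ) : ℝ := 1 / ((1 - x) * (μ + x * (1 - μ)))

theorem stmt_11 (μ : ℝ) (hμ0 : 0 < μ) (hμ : μ < 1 / 2) :
    StrictAntiOn (W₁ μ) (Set.Icc (0 : ℝ) ((1 - 2 * μ) / (2 * (1 - μ)))) ∧
      StrictMonoOn (W₁ μ) (Set.Ico ((1 - 2 * μ) / (2 * (1 - μ))) 1) := by
  have hμ1 : μ < 1 := by linarith
  have hden : (0:ℝ) < 2 * (1 - μ) := by linarith
  have hc1 : (1 - 2 * μ) / (2 * (1 - μ)) < 1 := by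
    rw [div_lt_one hden]; linarith
  have hpos : ∀ x : ℝ, 0 ≤ x → x < 1 → 0 < (1 - x) * (μ + x * (1 - μ)) := by
    intro x hx0 hx1
    apply mul_pos (by linarith)
    nlinarith
  constructor
  · intro a ha b hb hab
    have hb' : b * (2 * (1 - μ)) ≤ 1 - 2 * μ := by
      have := hb.2; rwa [le_div_iff₀ hden] at this
    have hb1 : b < 1 := lt_of_le_of_lt hb.2 hc1
    have ha1 : a < 1 := lt_trans hab hb1
    have pa := hpos a ha.1 ha1
    have pb := hpos b hb.1 hb1
    show 1 / _ < 1 / _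
    apply one_div_lt_one_div_of_lt pa
    have hba : (0:ℝ) < 1 - μ := by linarith
    have key : 0 < (b - a) * ((1 - 2*μ) - (a + b) * (1 - μ)) :=
      mul_pos (by linarith) (by nlinarith [mul_lt_mul_of_pos_right hab hba])
    nlinarith [key]
  · intro a ha b hb hab
    have ha' : 1 - 2 * μ ≤ a * (2 * (1 - μ)) := by
      have := ha.1; rwa [div_le_iff₀ hden] at this
    have ha0 : 0 ≤ a := le_trans (by rw [le_div_iff₀ hden]; nlinarith) ha.1
    have hb0 : 0 ≤ b := le_trans ha0 hab.le
    have pa := hpos a ha0 ha.2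
    have pb := hpos b hb0 hb.2
    show 1 / _ < 1 / _
    apply one_div_lt_one_div_of_lt pb
    have hba : (0:ℝ) < 1 - μ := by linarith
    have key : 0 < (b - a) * ((a + b) * (1 - μ) - (1 - 2*μ)) :=
      mul_pos (by linarith) (by nlinarith [mul_lt_mul_of_pos_right hab hba])
    nlinarith [key]
end

section
/- (Lemma 2.iv) For every low service rate μ ∈ (0,1), the T = 1 delay function W₁(λ) = 1/((1−λ)·(μ + λ(1−μ))) is convex on the interval [0,1). -/
theorem stmt_12 (μ : ℝ) (hμ : μ ∈ Set.Ioo (0 : ℝ) 1) :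
    ConvexOn ℝ (Set.Ico (0 : ℝ) 1) (W₁ μ) := by
  obtain ⟨hμ0, hμ1⟩ := hμ
  have hinv : ConvexOn ℝ (Set.Ioi (0:ℝ)) (fun x : ℝ => x⁻¹) := by
    have := convexOn_zpow (𝕜 := ℝ) (-1)
    simpa using this
  -- first term : (1 - x)⁻¹
  set L1 : ℝ →ᵃ[ℝ] ℝ := AffineMap.lineMap (1:ℝ) (0:ℝ) with hL1
  set L2 : ℝ →ᵃ[ℝ] ℝ := AffineMap.lineMap μ (1:ℝ) with hL2
  have hL1x : ∀ x : ℝ, L1 x = 1 - x := by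
    intro x; simp [hL1, AffineMap.lineMap_apply]; ring
  have hL2x : ∀ x : ℝ, L2 x = μ + x * (1 - μ) := by
    intro x; simp [hL2, AffineMap.lineMap_apply]; ring
  have h1' := hinv.comp_affineMap L1
  have h2' := hinv.comp_affineMap L2
  have hsub1 : Set.Ico (0:ℝ) 1 ⊆ L1 ⁻¹' Set.Ioi 0 := by
    intro x hx
    simp only [Set.mem_preimage, Set.mem_Ioi, hL1x]
    linarith [hx.2]
  have hsub2 : Set.Ico (0:ℝ) 1 ⊆ L2 ⁻¹' Set.Ioi 0 := by
    intro x hx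
    simp only [Set.mem_preimage, Set.mem_Ioi, hL2x]
    nlinarith [hx.1, hx.2]
  have h1 := h1'.subset hsub1 (convex_Ico 0 1)
  have h2 := (h2'.subset hsub2 (convex_Ico 0 1)).smul (by linarith : (0:ℝ) ≤ 1 - μ)
  have hsum := h1.add h2
  refine hsum.congr ?_
  intro x hx
  have hx1 : (1:ℝ) - x > 0 := by linarith [hx.2]
  have hx2 : μ + x * (1 - μ) > 0 := by nlinarith [hx.1, hx.2]
  simp only [Function.comp, Pi.add_apply, Pi.smul_apply, smul_eq_mul, hL1x, hL2x, W₁]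
  field_simp
  ring
end

section
/- (Theorem 3.v) If R > 2 and 1 − R/4 < μ < 1/R (with μ ∈ (0,1)), then the set {λ ∈ (0,1) : W₁(λ) = R} of positive equilibrium arrival rates equals the two-element set {λ₁ᵉ, λ₂ᵉ}, where λ₁ᵉ = [R(1−2μ) + √(R(R−4(1−μ)))]/(2R(1−μ)) and λ₂ᵉ = [R(1−2μ) − √(R(R−4(1−μ)))]/(2R(1−μ)), and λ₂ᵉ < λ₁ᵉ. -/
theorem stmt_14 (μ R : ℝ) (hμ : μ ∈ Set.Ioo (0 : ℝ) 1) (hR : 2 < R)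
    (h1 : 1 - R / 4 < μ) (h2 : μ < 1 / R) :
    {lam ∈ Set.Ioo (0 : ℝ) 1 | W₁ μ lam = R} =
        {(R * (1 - 2 * μ) + Real.sqrt (R * (R - 4 * (1 - μ)))) / (2 * R * (1 - μ)),
         (R * (1 - 2 * μ) - Real.sqrt (R * (R - 4 * (1 - μ)))) / (2 * R * (1 - μ))} ∧
      (R * (1 - 2 * μ) - Real.sqrt (R * (R - 4 * (1 - μ)))) / (2 * R * (1 - μ)) <
        (R * (1 - 2 * μ) + Real.sqrt (R * (R - 4 * (1 - μ)))) / (2 * R * (1 - μ)) := by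
  obtain ⟨hμ0, hμ1⟩ := hμ
  have hR0 : (0:ℝ) < R := by linarith
  have hRμ : μ * R < 1 := (lt_div_iff₀ hR0).mp h2
  set s := Real.sqrt (R * (R - 4 * (1 - μ))) with hs
  have hdpos : 0 < R * (R - 4 * (1 - μ)) := by nlinarith
  have hs2 : s ^ 2 = R * (R - 4 * (1 - μ)) := Real.sq_sqrt hdpos.le
  have hs0 : 0 < s := Real.sqrt_pos.mpr hdpos
  have hμhalf : μ < 1 / 2 := by
    have : 1 / R < 1 / 2 := by
      rw [div_lt_div_iff₀ hR0 (by norm_num)]; linarith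
    linarith
  have hsR : s < R := by nlinarith
  have hsB : s < R * (1 - 2 * μ) := by nlinarith
  have ha : (0:ℝ) < 2 * R * (1 - μ) := by nlinarith
  constructor
  · ext lam
    simp only [Set.mem_setOf_eq, Set.mem_Ioo, Set.mem_insert_iff, Set.mem_singleton_iff]
    constructor
    · rintro ⟨⟨h0, h1'⟩, heq⟩
      unfold W₁ at heq
      have hD : 0 < (1 - lam) * (μ + lam * (1 - μ)) :=
        mul_pos (by linarith) (by nlinarith)
      rw [div_eq_iff (ne_of_gt hD)] at heq
      have key : (2 * R * (1 - μ) * lam - R * (1 - 2 * μ) - s) *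
          (2 * R * (1 - μ) * lam - R * (1 - 2 * μ) + s) = 0 := by
        linear_combination 4 * R * (1 - μ) * heq - hs2
      rcases mul_eq_zero.mp key with h | h
      · left; field_simp; linarith
      · right; field_simp; linarith
    · have main : ∀ x : ℝ, 2 * R * (1 - μ) * x = R * (1 - 2 * μ) + s ∨
          2 * R * (1 - μ) * x = R * (1 - 2 * μ) - s →
          (1 - x) * (μ + x * (1 - μ)) ≠ 0 → W₁ μ x = R := by
        intro x hx hne
        have hq : R * (1 - μ) * x ^ 2 - R * (1 - 2 * μ) * x + (1 - R * μ) = 0 := by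
          have hq' : 4 * R * (1 - μ) *
              (R * (1 - μ) * x ^ 2 - R * (1 - 2 * μ) * x + (1 - R * μ)) = 0 := by
            rcases hx with hx | hx
            · linear_combination (2 * R * (1 - μ) * x - R * (1 - 2 * μ) + s) * hx + hs2
            · linear_combination (2 * R * (1 - μ) * x - R * (1 - 2 * μ) - s) * hx + hs2
          have h4 : (4 * R * (1 - μ)) ≠ 0 := ne_of_gt (by nlinarith)
          exact (mul_eq_zero.mp hq').resolve_left h4
        unfold W₁
        rw [div_eq_iff hne]
        linear_combination hq
      rintro (h | h) <;> subst h
      · have hx : 2 * R * (1 - μ) * ((R * (1 - 2 * μ) + s) / (2 * R * (1 - μ))) =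
            R * (1 - 2 * μ) + s := mul_div_cancel₀ _ (ne_of_gt ha)
        have hgt : 0 < (R * (1 - 2 * μ) + s) / (2 * R * (1 - μ)) :=
          div_pos (by linarith) ha
        have hlt : (R * (1 - 2 * μ) + s) / (2 * R * (1 - μ)) < 1 := by
          rw [div_lt_one ha]; nlinarith
        refine ⟨⟨hgt, hlt⟩, main _ (Or.inl hx) (ne_of_gt (mul_pos (by linarith) (by nlinarith)))⟩
      · have hx : 2 * R * (1 - μ) * ((R * (1 - 2 * μ) - s) / (2 * R * (1 - μ))) =
            R * (1 - 2 * μ) - s := mul_div_cancel₀ _ (ne_of_gt ha)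
        have hgt : 0 < (R * (1 - 2 * μ) - s) / (2 * R * (1 - μ)) :=
          div_pos (by linarith) ha
        have hlt : (R * (1 - 2 * μ) - s) / (2 * R * (1 - μ)) < 1 := by
          rw [div_lt_one ha]; nlinarith
        refine ⟨⟨hgt, hlt⟩, main _ (Or.inr hx) (ne_of_gt (mul_pos (by linarith) (by nlinarith)))⟩
  · gcongr
    linarith
end

section
/- (Theorem 3.vi) If R ≥ 1 and μ ∈ (0,1) with μ > 1/R, then the set {λ ∈ (0,1) : W₁(λ) = R} of positive equilibrium arrival rates equals the singleton {λ₁ᵉ}, where λ₁ᵉ = [R(1−2μ) + √(R(R−4(1−μ)))]/(2R(1−μ)). -/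
theorem stmt_15 (μ R : ℝ) (hμ : μ ∈ Set.Ioo (0 : ℝ) 1) (hR : 1 ≤ R) (h : 1 / R < μ) :
    {lam ∈ Set.Ioo (0 : ℝ) 1 | W₁ μ lam = R} =
      {(R * (1 - 2 * μ) + Real.sqrt (R * (R - 4 * (1 - μ)))) / (2 * R * (1 - μ))} := by
  obtain ⟨hμ0, hμ1⟩ := hμ
  have hR0 : (0 : ℝ) < R := lt_of_lt_of_le one_pos hR
  have hμR : 1 < μ * R := by
    have := (div_lt_iff₀ hR0).mp h
    linarith
  have hkey : 0 < R * (1 - μ) * (μ * R - 1) :=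
    mul_pos (mul_pos hR0 (by linarith)) (by linarith)
  set s := Real.sqrt (R * (R - 4 * (1 - μ))) with hs
  have hargnn : 0 ≤ R * (R - 4 * (1 - μ)) := by nlinarith [sq_nonneg (R - 2)]
  have hs0 : 0 ≤ s := Real.sqrt_nonneg _
  have hs2 : s ^ 2 = R * (R - 4 * (1 - μ)) := Real.sq_sqrt hargnn
  have hsR : s < R := by
    have h1 : R * (R - 4 * (1 - μ)) < R ^ 2 := by nlinarith
    have h2 : s < Real.sqrt (R ^ 2) := Real.sqrt_lt_sqrt hargnn h1
    rwa [Real.sqrt_sq hR0.le] at h2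
  have hsqlt : (R * (1 - 2 * μ)) ^ 2 < R * (R - 4 * (1 - μ)) := by nlinarith [hkey]
  have habs : |R * (1 - 2 * μ)| < s := by
    rw [← Real.sqrt_sq_eq_abs]
    exact Real.sqrt_lt_sqrt (sq_nonneg _) hsqlt
  obtain ⟨hgt, hlt⟩ := abs_lt.mp habs
  have hpos : 0 < R * (1 - 2 * μ) + s := by linarith
  have hden : 0 < 2 * R * (1 - μ) := by nlinarith
  set L := (R * (1 - 2 * μ) + s) / (2 * R * (1 - μ)) with hLdef
  clear_value s L
  have hL : 2 * R * (1 - μ) * L = R * (1 - 2 * μ) + s := by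
    rw [hLdef]; field_simp
  have hL0 : 0 < L := hLdef ▸ div_pos hpos hden
  have hL1 : L < 1 := by
    rw [hLdef, div_lt_one hden]; linarith
  ext lam
  simp only [Set.mem_setOf_eq, Set.mem_Ioo, Set.mem_singleton_iff, W₁]
  constructor
  · rintro ⟨⟨h0, h1⟩, hW⟩
    have hD : 0 < (1 - lam) * (μ + lam * (1 - μ)) :=
      mul_pos (by linarith) (by nlinarith)
    have hRD : R * ((1 - lam) * (μ + lam * (1 - μ))) = 1 := by
      rw [← hW]; field_simp
    have hA2 : (2 * R * (1 - μ) * lam - R * (1 - 2 * μ)) ^ 2 = s ^ 2 := by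
      rw [hs2]; linear_combination (-4 * R * (1 - μ)) * hRD
    have hfac : (2 * R * (1 - μ) * lam - R * (1 - 2 * μ) - s) *
        (2 * R * (1 - μ) * lam - R * (1 - 2 * μ) + s) = 0 := by
      linear_combination hA2
    rcases mul_eq_zero.mp hfac with hc | hc
    · rw [hLdef, eq_div_iff (ne_of_gt hden)]
      linarith
    · exfalso
      nlinarith [mul_pos hden h0]
  · intro hlam
    subst hlam
    refine ⟨⟨hL0, hL1⟩, ?_⟩
    have key : 4 * R * (1 - μ) * (R * ((1 - lam) * (μ + lam * (1 - μ))) - 1) = 0 := by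
      linear_combination (-1 : ℝ) * hs2 - (2 * R * (1 - μ) * lam - R * (1 - 2 * μ) + s) * hL
    have hRD : R * ((1 - lam) * (μ + lam * (1 - μ))) = 1 := by
      rcases mul_eq_zero.mp key with hc | hc
      · exact absurd hc (by nlinarith : (0:ℝ) < 4 * R * (1 - μ)).ne'
      · linarith
    have hDpos : (1 - lam) * (μ + lam * (1 - μ)) ≠ 0 := by
      intro hz; rw [hz, mul_zero] at hRD; linarith
    rw [div_eq_iff hDpos]
    linear_combination -hRD
end

section
/- (Theorem 3.i–iii) Let μ ∈ (0,1). If either (a) 0 ≤ R < 1, or (b) 1 ≤ R ≤ 2 and μ ≤ 1/R, or (c) R > 2 and μ < 1 − R/4, then the equation W₁(λ) = R has no solution λ ∈ (0,1); that is, λ = 0 is the unique equilibrium arrival rate. -/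
theorem stmt_16 (μ R : ℝ) (hμ : μ ∈ Set.Ioo (0 : ℝ) 1)
    (h : (0 ≤ R ∧ R < 1) ∨ (1 ≤ R ∧ R ≤ 2 ∧ μ ≤ 1 / R) ∨ (2 < R ∧ μ < 1 - R / 4)) :
    ∀ lam ∈ Set.Ioo (0 : ℝ) 1, W₁ μ lam ≠ R := by
  obtain ⟨hμ0, hμ1⟩ := hμ
  rintro lam ⟨hl0, hl1⟩ heq
  have hD : 0 < (1 - lam) * (μ + lam * (1 - μ)) := by
    apply mul_pos (by linarith); nlinarith
  rw [W₁, div_eq_iff hD.ne'] at heq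
  rcases h with ⟨hR0, hR1⟩ | ⟨hR1, hR2, hRμ⟩ | ⟨hR2, hRμ⟩
  · nlinarith [mul_pos hl0 (sub_pos.mpr hl1)]
  · have hRμ' : R * μ ≤ 1 := by
      rw [le_div_iff₀ (by linarith)] at hRμ; linarith [hRμ]
    rcases le_or_gt μ (1/2) with hc | hc
    · have key : R * (1 - (1 - 2*μ - 2*lam*(1-μ))^2) = 4*(1-μ) := by nlinarith [heq]
      nlinarith [sq_nonneg ((1-2*μ)*(1-lam)), mul_pos hl0 hl0,
        mul_nonneg (by linarith : (0:ℝ) ≤ 1-2*μ) (sq_nonneg (1-2*lam)),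
        sq_nonneg (1 - 2*μ - 2*lam*(1-μ)),
        mul_nonneg (by linarith : (0:ℝ) ≤ R - 1) (sq_nonneg (1 - 2*μ - 2*lam*(1-μ)))]
    · nlinarith [mul_pos hl0 (sub_pos.mpr hl1), mul_pos (mul_pos hl0 (sub_pos.mpr hl1)) (sub_pos.mpr hμ1)]
  · nlinarith [sq_nonneg (1 - 2*μ - 2*lam*(1-μ)), mul_pos hl0 (sub_pos.mpr hl1)]
end

section
/- (Lemma 4.i) For every low service rate μ with 1/2 < μ < 1 and every reward R, the social welfare function S₁(λ) = λ·(R − W₁(λ)) is strictly concave on the interval [0,1). -/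
noncomputable def S₁ (μ R : ℝ) (x : ℝ) : ℝ := x * (R - W₁ μ x)

theorem stmt_17 (μ : ℝ) (hμ : 1 / 2 < μ) (hμ1 : μ < 1) (R : ℝ) :
    StrictConcaveOn ℝ (Set.Ico (0 : ℝ) 1) (S₁ μ R) := by
  have hμ0 : (0:ℝ) < μ := by linarith
  set g : ℝ → ℝ := fun x => R * x - (1 - x)⁻¹ + μ * (μ + (1 - μ) * x)⁻¹ with hg
  -- denominators
  have hd1 : ∀ x : ℝ, x < 1 → (0:ℝ) < 1 - x := fun x hx => by linarith
  have hd2 : ∀ x : ℝ, 0 ≤ x → (0:ℝ) < μ + (1 - μ) * x := fun x hx => by nlinarith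
  -- S₁ = g on Ico 0 1
  have heq : Set.EqOn (S₁ μ R) g (Set.Ico (0:ℝ) 1) := by
    intro x hx
    have h1 := (hd1 x hx.2).ne'
    have h2 := (hd2 x hx.1).ne'
    have h2' : μ + x * (1 - μ) ≠ 0 := by rw [mul_comm]; exact h2
    simp only [S₁, W₁, hg]
    field_simp [h1, h2, h2']
    ring
  -- first derivative
  set g' : ℝ → ℝ := fun x => R - ((1 - x)^2)⁻¹ - μ * (1 - μ) * ((μ + (1 - μ) * x)^2)⁻¹ with hg'
  set g'' : ℝ → ℝ := fun x => -2 * ((1 - x)^3)⁻¹ + 2 * μ * (1 - μ)^2 * ((μ + (1 - μ) * x)^3)⁻¹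
    with hg''
  have hder1 : ∀ x ∈ Set.Ioo (0:ℝ) 1, HasDerivAt g (g' x) x := by
    intro x hx
    have h1 := (hd1 x hx.2).ne'
    have h2 := (hd2 x hx.1.le).ne'
    have e1 : HasDerivAt (fun y : ℝ => 1 - y) (-1) x := by
      simpa using (hasDerivAt_id' x).const_sub (1:ℝ)
    have e2 : HasDerivAt (fun y : ℝ => μ + (1 - μ) * y) (1 - μ) x := by
      simpa using ((hasDerivAt_id' x).const_mul (1 - μ)).const_add μ
    have eR : HasDerivAt (fun y : ℝ => R * y) R x := by
      simpa using (hasDerivAt_id x).const_mul R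
    have h := (eR.sub (e1.inv h1)).add ((e2.inv h2).const_mul μ)
    refine h.congr_deriv (Eq.symm ?_)
    simp only [hg']
    rw [div_eq_mul_inv, div_eq_mul_inv]
    ring
  have hder2 : ∀ x ∈ Set.Ioo (0:ℝ) 1, HasDerivAt g' (g'' x) x := by
    intro x hx
    have h1 := (hd1 x hx.2).ne'
    have h2 := (hd2 x hx.1.le).ne'
    have e1 : HasDerivAt (fun y : ℝ => (1 - y)^2) (2 * (1 - x) * (-1)) x := by
      have h : HasDerivAt (fun y : ℝ => 1 - y) (-1) x := by
        simpa using (hasDerivAt_id' x).const_sub (1:ℝ)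
      simpa using h.fun_pow 2
    have e2 : HasDerivAt (fun y : ℝ => (μ + (1 - μ) * y)^2)
        (2 * (μ + (1 - μ) * x) * (1 - μ)) x := by
      have h : HasDerivAt (fun y : ℝ => μ + (1 - μ) * y) (1 - μ) x := by
        simpa using ((hasDerivAt_id' x).const_mul (1 - μ)).const_add μ
      simpa using h.fun_pow 2
    have h1sq : ((1 - x)^2 : ℝ) ≠ 0 := pow_ne_zero _ h1
    have h2sq : ((μ + (1 - μ) * x)^2 : ℝ) ≠ 0 := pow_ne_zero _ h2
    have h := ((hasDerivAt_const x R).sub (e1.inv h1sq)).sub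
      ((e2.inv h2sq).const_mul (μ * (1 - μ)))
    refine h.congr_deriv (Eq.symm ?_)
    simp only [hg'']
    rw [div_eq_mul_inv, div_eq_mul_inv]
    have hcube1 : (((1 - x)^2)^2 : ℝ)⁻¹ = ((1 - x)^3)⁻¹ * (1 - x)⁻¹ := by
      rw [← mul_inv, ← pow_succ]; ring_nf
    have hcube2 : (((μ + (1 - μ) * x)^2)^2 : ℝ)⁻¹
        = ((μ + (1 - μ) * x)^3)⁻¹ * (μ + (1 - μ) * x)⁻¹ := by
      rw [← mul_inv, ← pow_succ]; ring_nf
    rw [hcube1, hcube2]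
    have m1 : (1 - x) * (1 - x)⁻¹ = 1 := mul_inv_cancel₀ h1
    have m2 : (μ + (1 - μ) * x) * (μ + (1 - μ) * x)⁻¹ = 1 := mul_inv_cancel₀ h2
    field_simp
    ring
  -- negativity of second derivative
  have hneg : ∀ x ∈ Set.Ioo (0:ℝ) 1, g'' x < 0 := by
    intro x hx
    have h1 := hd1 x hx.2
    have h2 := hd2 x hx.1.le
    have h1c : (0:ℝ) < (1 - x)^3 := by positivity
    have h2c : (0:ℝ) < (μ + (1 - μ) * x)^3 := by positivity
    have s1 : (1 - x)^3 ≤ 1 := by nlinarith [hx.1, hx.2, sq_nonneg (1 - x)]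
    have s2 : μ * (1 - μ)^2 < μ^3 := by nlinarith
    have s3 : μ^3 ≤ (μ + (1 - μ) * x)^3 := by
      apply pow_le_pow_left₀ hμ0.le
      nlinarith [hx.1]
    have hc0 : (0:ℝ) ≤ μ * (1 - μ)^2 := by positivity
    have key : μ * (1 - μ)^2 * (1 - x)^3 < (μ + (1 - μ) * x)^3 := by
      calc μ * (1 - μ)^2 * (1 - x)^3 ≤ μ * (1 - μ)^2 * 1 :=
            mul_le_mul_of_nonneg_left s1 hc0
        _ = μ * (1 - μ)^2 := by ring
        _ < μ^3 := s2
        _ ≤ (μ + (1 - μ) * x)^3 := s3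
    have hlt : 2 * μ * (1 - μ)^2 * ((μ + (1 - μ) * x)^3)⁻¹ < 2 * ((1 - x)^3)⁻¹ := by
      rw [inv_eq_one_div, inv_eq_one_div, mul_one_div, mul_one_div, div_lt_div_iff₀ h2c h1c]
      nlinarith [key]
    simp only [hg'']
    linarith
  -- strict concavity of g
  have hgconc : StrictConcaveOn ℝ (Set.Ico (0:ℝ) 1) g := by
    apply strictConcaveOn_of_deriv2_neg (convex_Ico 0 1)
    · -- continuity
      intro x hx
      have h1 := (hd1 x hx.2).ne'
      have h2 := (hd2 x hx.1).ne'
      apply ContinuousAt.continuousWithinAt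
      exact ((continuousAt_const.mul continuousAt_id).sub
        ((continuousAt_const.sub continuousAt_id).inv₀ h1)).add
        (continuousAt_const.mul
          ((continuousAt_const.add (continuousAt_const.mul continuousAt_id)).inv₀ h2))
    · intro x hx
      rw [interior_Ico] at hx
      have hmem : Set.Ioo (0:ℝ) 1 ∈ nhds x := (isOpen_Ioo).mem_nhds hx
      have hdg : deriv g =ᶠ[nhds x] g' := by
        filter_upwards [hmem] with y hy
        exact (hder1 y hy).deriv
      have hiter : deriv (deriv g) x = deriv g' x := hdg.deriv_eq
      simp only [Function.iterate_succ, Function.iterate_zero, Function.comp_apply, id_eq]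
      rw [hiter, (hder2 x hx).deriv]
      exact hneg x hx
  -- transfer to S₁
  obtain ⟨hconv, hstrict⟩ := hgconc
  refine ⟨hconv, fun {x} hx {y} hy hxy {a} {b} ha hb hab => ?_⟩
  have hm : a • x + b • y ∈ Set.Ico (0:ℝ) 1 := hconv hx hy ha.le hb.le hab
  rw [heq hx, heq hy, heq hm]
  exact hstrict hx hy hxy ha hb hab
end

section
/- (Lemma 4.iii) If R > 2 and 1 − R/4 < μ < 1/2 (with μ ∈ (0,1)), then the social welfare function S₁(λ) = λ·(R − W₁(λ)) is strictly decreasing and concave on the interval (λ₁ᵉ, 1), where λ₁ᵉ = [R(1−2μ) + √(R(R−4(1−μ)))]/(2R(1−μ)). -/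
theorem stmt_18 (μ R : ℝ) (hμ : μ ∈ Set.Ioo (0 : ℝ) 1) (hR : 2 < R)
    (h1 : 1 - R / 4 < μ) (h2 : μ < 1 / 2) :
    StrictAntiOn (S₁ μ R)
        (Set.Ioo ((R * (1 - 2 * μ) + Real.sqrt (R * (R - 4 * (1 - μ)))) / (2 * R * (1 - μ))) 1) ∧
      ConcaveOn ℝ
        (Set.Ioo ((R * (1 - 2 * μ) + Real.sqrt (R * (R - 4 * (1 - μ)))) / (2 * R * (1 - μ))) 1)
        (S₁ μ R) := by
  obtain ⟨hμ0, hμ1⟩ := hμ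
  have hR0 : (0:ℝ) < R := by linarith
  have ha : (0:ℝ) < 1 - μ := by linarith
  have hΔ : (0:ℝ) < R * (R - 4 * (1 - μ)) := by nlinarith
  set s := Real.sqrt (R * (R - 4 * (1 - μ))) with hsdef
  have hs2 : s ^ 2 = R * (R - 4 * (1 - μ)) := Real.sq_sqrt hΔ.le
  have hs0 : 0 < s := Real.sqrt_pos.2 hΔ
  set L := (R * (1 - 2 * μ) + s) / (2 * R * (1 - μ)) with hLdef
  -- key pointwise facts on the interval
  have hden : (0:ℝ) < 2 * R * (1 - μ) := by positivity
  have hkey : ∀ x ∈ Set.Ioo L 1,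
      0 < x ∧ x < 1 ∧ 0 < (1 - x) * (μ + x * (1 - μ)) ∧
      R * ((1 - x) * (μ + x * (1 - μ))) < 1 ∧ (1 - 2*μ) - 2*(1-μ)*x < 0 := by
    intro x hx
    obtain ⟨hxL, hx1⟩ := hx
    have hxA : R * (1 - 2 * μ) + s < 2 * R * (1 - μ) * x := by
      rw [hLdef, div_lt_iff₀ hden] at hxL; linarith
    have hx0 : 0 < x := by nlinarith
    have hD : 0 < (1 - x) * (μ + x * (1 - μ)) := by nlinarith
    have hA : 0 < 2 * R * (1 - μ) * x - R * (1 - 2 * μ) - s := by linarith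
    have hB : 0 < 2 * R * (1 - μ) * x - R * (1 - 2 * μ) + s := by linarith
    have hRD : R * ((1 - x) * (μ + x * (1 - μ))) < 1 := by
      nlinarith [mul_pos hA hB, hs2]
    have hvx : (1 - 2*μ) - 2*(1-μ)*x < 0 := by nlinarith
    exact ⟨hx0, hx1, hD, hRD, hvx⟩
  -- derivative formula
  have hderiv : ∀ x ∈ Set.Ioo L 1,
      HasDerivAt (S₁ μ R)
        (R - (μ + (1 - μ) * x ^ 2) / ((1 - x) * (μ + x * (1 - μ))) ^ 2) x := by
    intro x hx
    obtain ⟨_, _, hD, _, _⟩ := hkey x hx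
    have hne : (1 - x) * (μ + x * (1 - μ)) ≠ 0 := ne_of_gt hD
    have hDd : HasDerivAt (fun y => (1 - y) * (μ + y * (1 - μ)))
        ((-1) * (μ + x * (1 - μ)) + (1 - x) * (1 * (1 - μ))) x :=
      ((hasDerivAt_id x).const_sub 1).mul
        (((hasDerivAt_id x).mul_const (1 - μ)).const_add μ)
    have hinv := hDd.inv hne
    have hmain := ((hasDerivAt_id x).mul_const R).sub ((hasDerivAt_id x).mul hinv)
    simp only [id_eq] at hmain
    have heq : (fun y => y * R - y * ((1 - y) * (μ + y * (1 - μ)))⁻¹) = S₁ μ R := by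
      funext y; simp only [S₁, W₁, one_div]; ring
    replace hmain : HasDerivAt (fun y => y * R - y * ((1 - y) * (μ + y * (1 - μ)))⁻¹) _ x := hmain
    simp only [Pi.inv_apply] at hmain
    rw [heq] at hmain
    convert hmain using 1
    field_simp
    ring
  have hcont : ContinuousOn (S₁ μ R) (Set.Ioo L 1) :=
    fun x hx => (hderiv x hx).differentiableAt.continuousAt.continuousWithinAt
  constructor
  · -- strictly decreasing
    apply strictAntiOn_of_deriv_neg (convex_Ioo L 1) hcont
    intro x hx
    rw [interior_Ioo] at hx
    rw [(hderiv x hx).deriv]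
    obtain ⟨hx0, hx1, hD, hRD, hvx⟩ := hkey x hx
    have hD2 : (0:ℝ) < ((1 - x) * (μ + x * (1 - μ))) ^ 2 := by positivity
    rw [sub_neg, lt_div_iff₀ hD2]
    nlinarith [mul_pos hD (show (0:ℝ) < 1 - R * ((1 - x) * (μ + x * (1 - μ))) by linarith),
      mul_pos hx0 (show (0:ℝ) < 2*(1-μ)*x - (1-2*μ) by linarith)]
  · -- concave
    set g : ℝ → ℝ :=
      fun x => R - (μ + (1 - μ) * x ^ 2) / ((1 - x) * (μ + x * (1 - μ))) ^ 2 with hg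
    have hev : ∀ x ∈ Set.Ioo L 1, deriv (S₁ μ R) =ᶠ[nhds x] g := by
      intro x hx
      filter_upwards [isOpen_Ioo.mem_nhds hx] with y hy
      exact (hderiv y hy).deriv
    have hgd : ∀ x ∈ Set.Ioo L 1, HasDerivAt g
        (-((2*(1-μ)*x * ((1-x)*(μ+x*(1-μ))) -
            2*(μ+(1-μ)*x^2) * ((1-2*μ) - 2*(1-μ)*x)) / ((1-x)*(μ+x*(1-μ)))^3)) x := by
      intro x hx
      obtain ⟨hx0, hx1, hD, _, _⟩ := hkey x hx
      have hne : (1 - x) * (μ + x * (1 - μ)) ≠ 0 := ne_of_gt hD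
      have hDd : HasDerivAt (fun y => (1 - y) * (μ + y * (1 - μ)))
          ((-1) * (μ + x * (1 - μ)) + (1 - x) * (1 * (1 - μ))) x :=
        ((hasDerivAt_id x).const_sub 1).mul
          (((hasDerivAt_id x).mul_const (1 - μ)).const_add μ)
      have hN : HasDerivAt (fun y => μ + (1 - μ) * y ^ 2)
          ((1 - μ) * (2 * x ^ 1)) x := by
        have := ((hasDerivAt_pow 2 x).const_mul (1 - μ)).const_add μ
        simpa using this
      have hDsq := hDd.pow 2
      have hdiv := hN.div hDsq (pow_ne_zero 2 hne)
      have hmain := hdiv.const_sub R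
      replace hmain : HasDerivAt g _ x := hmain
      simp only [Pi.pow_apply] at hmain
      convert hmain using 1
      have hne1 : (1:ℝ) - x ≠ 0 := by linarith
      have hne2 : μ + x * (1 - μ) ≠ 0 := by nlinarith
      field_simp
      ring
    apply concaveOn_of_deriv2_nonpos (convex_Ioo L 1) hcont
    · intro x hx
      rw [interior_Ioo] at hx
      exact (hderiv x hx).differentiableAt.differentiableWithinAt
    · intro x hx
      rw [interior_Ioo] at hx
      exact (((hev x hx).differentiableAt_iff).2
        (hgd x hx).differentiableAt).differentiableWithinAt
    · intro x hx
      rw [interior_Ioo] at hx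
      have h2 : deriv^[2] (S₁ μ R) x = deriv (deriv (S₁ μ R)) x := by
        simp [Function.iterate_succ_apply', Function.iterate_one]
      rw [h2, (hev x hx).deriv_eq, (hgd x hx).deriv]
      obtain ⟨hx0, hx1, hD, hRD, hvx⟩ := hkey x hx
      have hN0 : (0:ℝ) < μ + (1 - μ) * x ^ 2 := by positivity
      have hE : 0 ≤ 2*(1-μ)*x * ((1-x)*(μ+x*(1-μ))) -
          2*(μ+(1-μ)*x^2) * ((1-2*μ) - 2*(1-μ)*x) := by
        nlinarith [mul_pos hN0 (show (0:ℝ) < 2*(1-μ)*x - (1-2*μ) by linarith),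
          mul_pos (mul_pos (mul_pos ha hx0) hD) (show (0:ℝ) < 2 by norm_num)]
      exact neg_nonpos.mpr (div_nonneg hE (by positivity))
end

section
/- (Proposition 2) For every low service rate μ ∈ (0,1) and reward R ≥ 1, there exists an equilibrium arrival rate λᵉ ∈ [0,1) — i.e., either λᵉ = 0 and R ≤ 1/μ, or λᵉ ∈ (0,1) with W₁(λᵉ) = R — such that every socially optimal arrival rate λ* satisfies λ* ≤ λᵉ, where λ* ∈ [0,1) is socially optimal if S₁(λ*) ≥ S₁(λ) for all λ ∈ [0,1). -/
theorem stmt_19 (μ R : ℝ) (hμ : μ ∈ Set.Ioo (0 : ℝ) 1) (hR : 1 ≤ R) :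
    ∃ lamE ∈ Set.Ico (0 : ℝ) 1,
      ((lamE = 0 ∧ R ≤ 1 / μ) ∨ (lamE ∈ Set.Ioo (0 : ℝ) 1 ∧ W₁ μ lamE = R)) ∧
        ∀ lamS ∈ Set.Ico (0 : ℝ) 1,
          (∀ lam ∈ Set.Ico (0 : ℝ) 1, S₁ μ R lam ≤ S₁ μ R lamS) → lamS ≤ lamE := by
  obtain ⟨hμ0, hμ1⟩ := hμ
  have hR0 : (0:ℝ) < R := by linarith
  have h1μ : (0:ℝ) < 1 - μ := by linarith
  set v : ℝ := (1 - 2*μ) / (2*(1-μ)) with hv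
  have hv2 : 2*(1-μ)*v = 1 - 2*μ := by
    rw [hv]; field_simp
  set c : ℝ := max v 0 with hc
  have hc0 : (0:ℝ) ≤ c := le_max_right _ _
  have hc1 : c < 1 := by
    rcases max_cases v 0 with ⟨h, _⟩ | ⟨h, _⟩ <;> rw [hc, h]
    · rw [hv, div_lt_one (by linarith)]; linarith
    · linarith
  set g : ℝ → ℝ := fun x => (1 - x) * (μ + x * (1 - μ)) with hg
  have hgpos : ∀ x ∈ Set.Ico (0:ℝ) 1, 0 < g x := by
    rintro x ⟨hx0, hx1⟩
    have h1 : 0 < 1 - x := by linarith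
    have h2 : 0 < μ + x*(1-μ) := by nlinarith
    exact mul_pos h1 h2
  have hgmax : ∀ x, 0 ≤ x → g x ≤ g c := by
    intro x hx
    rcases max_cases v 0 with ⟨h, hv0⟩ | ⟨h, hv0⟩ <;> rw [hc, h] <;> simp only [hg]
    · nlinarith [sq_nonneg (x - v), mul_nonneg (mul_nonneg hx hx) h1μ.le]
    · have h2μ : 1 - 2*μ ≤ 0 := by nlinarith
      nlinarith [mul_nonpos_of_nonneg_of_nonpos hx h2μ, mul_nonneg (mul_nonneg hx hx) h1μ.le]
  have hdec : ∀ x y, c ≤ x → x < y → g y < g x := by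
    intro x y hx hxy
    have hxv : v ≤ x := le_trans (le_max_left _ _) hx
    have hxb : 1 - 2*μ ≤ 2*(1-μ)*x := by
      rw [← hv2]; nlinarith
    have key : 0 < (y - x) * ((1-μ)*(x+y) - (1-2*μ)) :=
      mul_pos (by linarith) (by nlinarith)
    simp only [hg]
    nlinarith [key]
  have hW : ∀ x, W₁ μ x = 1 / g x := fun x => rfl
  by_cases hcase : g c < 1/R
  · refine ⟨0, ⟨le_refl 0, one_pos⟩, Or.inl ⟨rfl, ?_⟩, ?_⟩
    · have hμc : μ ≤ g c := by
        have := hgmax 0 le_rfl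
        simpa [hg] using this
      have hlt : μ < 1/R := lt_of_le_of_lt hμc hcase
      rw [le_div_iff₀ hμ0]
      rw [lt_div_iff₀ hR0] at hlt
      linarith
    · rintro lamS ⟨hS0, hS1⟩ hmax
      by_contra h
      push_neg at h
      have hgS := hgpos lamS ⟨hS0, hS1⟩
      have hgle : g lamS < 1/R := lt_of_le_of_lt (hgmax lamS hS0) hcase
      have hWgt : R < W₁ μ lamS := by
        rw [hW, lt_div_iff₀ hgS]
        rw [lt_div_iff₀ hR0] at hgle
        linarith
      have h0 := hmax 0 ⟨le_rfl, one_pos⟩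
      have hneg : lamS * (R - W₁ μ lamS) < 0 := mul_neg_of_pos_of_neg h (by linarith)
      simp [S₁] at h0
      linarith
  · push_neg at hcase
    have hg1 : g 1 = 0 := by simp [hg]
    have hcont : ContinuousOn g (Set.Icc c 1) := by
      apply Continuous.continuousOn; simp only [hg]; continuity
    have hmem : (1/R) ∈ Set.Icc (g 1) (g c) := ⟨by rw [hg1]; positivity, hcase⟩
    obtain ⟨lamE, hlam, hglam⟩ := intermediate_value_Icc' (le_of_lt hc1) hcont hmem
    obtain ⟨hlc, hl1⟩ := hlam
    have hl0 : 0 ≤ lamE := le_trans hc0 hlc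
    have hlne1 : lamE < 1 := by
      rcases lt_or_eq_of_le hl1 with h | h
      · exact h
      · exfalso; rw [h, hg1] at hglam
        have hp : (0:ℝ) < 1/R := by positivity
        linarith
    have hWE : W₁ μ lamE = R := by
      rw [hW, hglam, one_div_one_div]
    have hmaxclaim : ∀ lamS ∈ Set.Ico (0:ℝ) 1,
        (∀ lam ∈ Set.Ico (0:ℝ) 1, S₁ μ R lam ≤ S₁ μ R lamS) → lamS ≤ lamE := by
      rintro lamS ⟨hS0, hS1⟩ hmax
      by_contra h
      push_neg at h
      have hgS := hgpos lamS ⟨hS0, hS1⟩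
      have hSpos : 0 < lamS := lt_of_le_of_lt hl0 h
      have hgdec : g lamS < 1/R := by
        have := hdec lamE lamS hlc h
        rw [hglam] at this; exact this
      have hWgt : R < W₁ μ lamS := by
        rw [hW, lt_div_iff₀ hgS]
        rw [lt_div_iff₀ hR0] at hgdec
        linarith
      have h0 := hmax 0 ⟨le_rfl, one_pos⟩
      have hneg : lamS * (R - W₁ μ lamS) < 0 := mul_neg_of_pos_of_neg hSpos (by linarith)
      simp [S₁] at h0
      linarith
    rcases eq_or_lt_of_le hl0 with h0 | h0
    · refine ⟨0, ⟨le_refl 0, one_pos⟩, Or.inl ⟨rfl, ?_⟩, ?_⟩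
      · rw [← h0] at hglam
        have hgμ : g 0 = μ := by simp [hg]
        rw [hgμ] at hglam
        rw [hglam, one_div_one_div]
      · intro lamS hS hmax
        exact le_of_le_of_eq (hmaxclaim lamS hS hmax) h0.symm
    · exact ⟨lamE, ⟨hl0, hlne1⟩, Or.inr ⟨⟨h0, hlne1⟩, hWE⟩, hmaxclaim⟩
end
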